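/- arXiv:2211.07239 — 3 statements merged into one kernel-verified Lean document; each statement's English description precedes it below -/
import Mathlib

section
/- Let m ≥ 1 be an integer and let ζ : ℝ^d → ℝ^d be m-times continuously differentiable with λ := inf_{θ∈[0,1]} inf_{x∈ℝ^d} |det(I + θ Dζ(x))| > 0 and M_m := max_{0≤k≤m} sup_{x∈ℝ^d} |D^k ζ(x)| < ∞, and let τ(x) = x + ζ(x), which is a C^m-diffeomorphism of ℝ^d. Define ζ*(x) = −x + τ^{-1}(x) for x ∈ ℝ^d. Then ζ* is m-times continuously differentiable, sup_{ℝ^d} |ζ*| = sup_{ℝ^d} |ζ|, sup_{ℝ^d} |D^k ζ*| ≤ M*_m · max_{1≤j≤k} sup_{ℝ^d} |D^j ζ| for k = 1,…,m with a constant M*_m = M*_m(d, λ, M_m), and inf_{θ∈[0,1]} inf_{ℝ^d} |det(I + θ Dζ*)| ≥ λ' · inf_{θ∈[0,1]} inf_{ℝ^d} |det(I + θ Dζ)|, where λ' > 0 is a constant depending only on d, λ and M_1. -/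
/-!
Write `τ = id + ζ` and `ι = τ⁻¹`, so that `ζ* = ι - id = -ζ ∘ ι`. By the inverse function theorem
`ι` is `C^m` with `Dι = (1 + Dζ ∘ ι)⁻¹`, and this inverse is bounded in terms of `d, λ, M₁`
because inversion is continuous on the compact set of operators `T` with `‖T‖ ≤ 1 + M₁` and
`|det T| ≥ λ`. For `k ≥ 2`, Faà di Bruno's formula for `ζ ∘ ι = id - ι` has exactly one term
involving `D^k ι`, namely `Dζ(ι x) ∘ D^k ι`; hence `(1 + Dζ(ι x)) ∘ D^k ι` is minus a sum of
products of some `D^j ζ` (`1 ≤ j ≤ k`) with `D^i ι` (`i < k`), and induction on `k` bounds all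
derivatives.
Finally `(1 + A)(1 + θ((1 + A)⁻¹ - 1)) = 1 + (1 - θ)A`, so
`det(1 + θ Dζ*) = det(1 + (1 - θ) Dζ) / det(1 + Dζ)` at corresponding points, and
`|det(1 + Dζ)|` is bounded in terms of `d` and `M₁`.
-/

open MeasureTheory Real

noncomputable section

abbrev Rd (d : ℕ) : Type := EuclideanSpace ℝ (Fin d)

open Function Finset

namespace OrderedFinpartition

variable {n : ℕ}

def single (n : ℕ) (hn : 0 < n) : OrderedFinpartition n where
  length := 1
  partSize _ := n
  partSize_pos _ := hn
  emb _ := id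
  emb_strictMono _ := strictMono_id
  parts_strictMono := Subsingleton.strictMono _
  disjoint _ _ _ _ h := (h (Subsingleton.elim _ _)).elim
  cover x := ⟨0, x, rfl⟩

lemma sum_partSize (c : OrderedFinpartition n) : ∑ i, c.partSize i = n := by
  simpa [Fintype.card_sigma] using Fintype.card_congr c.equivSigma

lemma eq_single_of_partSize_eq (hn : 0 < n) (c : OrderedFinpartition n) {i : Fin c.length}
    (hi : c.partSize i = n) : c = single n hn := by
  have hlen : c.length = 1 := by
    have hall : ∀ j, j = i := fun j => by
      by_contra hji
      have := add_le_sum (f := c.partSize) (fun _ _ => Nat.zero_le _) (mem_univ i) (mem_univ j)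
        (Ne.symm hji)
      have := c.partSize_pos j
      rw [sum_partSize] at *
      omega
    have := Fintype.card_le_one_iff.2 fun a b => (hall a).trans (hall b).symm
    have := c.length_pos hn
    simp only [Fintype.card_fin] at *
    omega
  obtain ⟨len, size, _, emb, emb_mono, _, _, _⟩ := c
  subst hlen
  obtain rfl : i = 0 := Subsingleton.elim _ _
  obtain rfl : size = fun _ => n := funext fun j => (Subsingleton.elim j 0) ▸ hi
  obtain rfl : emb = fun _ => id := funext fun j => (emb_mono j).range_inj strictMono_id |>.1 <| by
    rw [Set.range_id]
    exact Set.range_eq_univ.2 (Finite.surjective_of_injective (emb_mono j).injective)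
  rfl

end OrderedFinpartition

section NormedField

variable {𝕜 E F G : Type*} [NontriviallyNormedField 𝕜] [NormedAddCommGroup E] [NormedSpace 𝕜 E]
  [NormedAddCommGroup F] [NormedSpace 𝕜 F] [NormedAddCommGroup G] [NormedSpace 𝕜 G]

theorem norm_iteratedFDeriv_comp_sub_le {g : F → G} {f : E → F} {x : E} {n : WithTop ℕ∞}
    {k : ℕ} {A C : ℝ} (hg : ContDiffAt 𝕜 n g (f x)) (hf : ContDiffAt 𝕜 n f x) (hk : 0 < k)
    (hkn : k ≤ n) (hA : 1 ≤ A)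
    (hgC : ∀ j, 1 ≤ j → j ≤ k → ‖iteratedFDeriv 𝕜 j g (f x)‖ ≤ C)
    (hfA : ∀ j, 1 ≤ j → j < k → ‖iteratedFDeriv 𝕜 j f x‖ ≤ A) :
    ‖iteratedFDeriv 𝕜 k (g ∘ f) x -
        (fderiv 𝕜 g (f x)).compContinuousMultilinearMap (iteratedFDeriv 𝕜 k f x)‖ ≤
      Fintype.card (OrderedFinpartition k) * C * A ^ k := by
  set q := ftaylorSeries 𝕜 g (f x)
  set p := ftaylorSeries 𝕜 f x
  set single := OrderedFinpartition.single k hk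
  have hsingle : q.compAlongOrderedFinpartition p single =
      (fderiv 𝕜 g (f x)).compContinuousMultilinearMap (iteratedFDeriv 𝕜 k f x) := by
    ext v
    exact iteratedFDeriv_one_apply _
  have hC : 0 ≤ C := (norm_nonneg _).trans (hgC 1 le_rfl hk)
  have hterm : ∀ c ∈ univ.erase single, ‖q.compAlongOrderedFinpartition p c‖ ≤ C * A ^ k := by
    intro c hc
    have hsize : ∀ i, ‖p (c.partSize i)‖ ≤ A := fun i =>
      hfA _ (c.partSize_pos i) <| (c.partSize_le i).lt_of_ne fun h =>
        ne_of_mem_erase hc (c.eq_single_of_partSize_eq hk h)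
    calc ‖q.compAlongOrderedFinpartition p c‖ ≤ ‖q c.length‖ * ∏ i, ‖p (c.partSize i)‖ :=
          c.norm_compAlongOrderedFinpartition_le _ _
      _ ≤ C * A ^ c.length := by
          gcongr
          · exact hgC _ (c.length_pos hk) c.length_le
          · calc ∏ i, ‖p (c.partSize i)‖ ≤ ∏ _i : Fin c.length, A :=
                  prod_le_prod (fun i _ => norm_nonneg _) fun i _ => hsize i
              _ = A ^ c.length := by simp
      _ ≤ C * A ^ k := mul_le_mul_of_nonneg_left (pow_le_pow_right₀ hA c.length_le) hC
  rw [iteratedFDeriv_comp hg hf hkn, FormalMultilinearSeries.taylorComp,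
    ← add_sum_erase _ _ (mem_univ single), hsingle, add_sub_cancel_left]
  calc _ ≤ ∑ c ∈ univ.erase single, C * A ^ k := norm_sum_le_of_le _ hterm
    _ ≤ Fintype.card (OrderedFinpartition k) * (C * A ^ k) := by
        rw [sum_const, nsmul_eq_mul]
        gcongr
        exact card_erase_le
    _ = _ := by ring

theorem iteratedFDeriv_id_eq_zero {j : ℕ} (hj : 2 ≤ j) : iteratedFDeriv 𝕜 j (id : E → E) = 0 := by
  obtain ⟨i, rfl⟩ : ∃ i, j = i + 1 := ⟨j - 1, by omega⟩
  ext1 x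
  rw [iteratedFDeriv_succ_eq_comp_right]
  simp [iteratedFDeriv_const_of_ne (show i ≠ 0 by omega)]

theorem iteratedFDeriv_sub_id {f : E → E} {x : E} {j : ℕ} (hf : ContDiffAt 𝕜 j f x) (hj : 2 ≤ j) :
    iteratedFDeriv 𝕜 j (fun y => f y - y) x = iteratedFDeriv 𝕜 j f x := by
  rw [show (fun y => f y - y) = f - id from rfl, iteratedFDeriv_sub_apply hf contDiffAt_id,
    iteratedFDeriv_id_eq_zero hj, Pi.zero_apply, sub_zero]

theorem ContinuousLinearMap.det_one_add_mul_det_one_add_smul_ringInverse_sub {A : E →L[𝕜] E}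
    (hA : IsUnit (1 + A)) (θ : 𝕜) :
    (1 + A).det * (1 + θ • (Ring.inverse (1 + A) - 1)).det = (1 + (1 - θ) • A).det := by
  have h : (1 + A) * (1 + θ • (Ring.inverse (1 + A) - 1)) = 1 + (1 - θ) • A := by
    rw [mul_add, mul_one, mul_smul_comm, mul_sub, Ring.mul_inverse_cancel _ hA, mul_one]
    module
  rw [← h]
  exact (map_mul LinearMap.det _ _).symm

end NormedField

theorem ContDiffAt.contDiffAt_of_leftInverse {𝕜 E F : Type*} [RCLike 𝕜] [NormedAddCommGroup E]
    [NormedSpace 𝕜 E] [CompleteSpace E] [NormedAddCommGroup F] [NormedSpace 𝕜 F]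
    {f : E → F} {g : F → E} {f' : E ≃L[𝕜] F} {a : E} {n : WithTop ℕ∞}
    (hf : ContDiffAt 𝕜 n f a) (hf' : HasFDerivAt f (f' : E →L[𝕜] F) a) (hn : n ≠ 0)
    (hg : LeftInverse g f) : ContDiffAt 𝕜 n g (f a) :=
  (hf.to_localInverse hf' hn).congr_of_eventuallyEq <|
    (hf.hasStrictFDerivAt' hf' hn).localInverse_unique (.of_forall hg)

namespace InverseOfIdAdd

theorem sub_eq_neg {E : Type*} [AddCommGroup E] {ζ ι : E → E}
    (hr : RightInverse ι (fun x => x + ζ x)) (y : E) : ι y - y = -ζ (ι y) := by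
  rw [eq_neg_iff_add_eq_zero, sub_add_eq_add_sub, show ι y + ζ (ι y) = y from hr y, sub_self]

theorem iSup_norm_sub_eq {E : Type*} [SeminormedAddCommGroup E] {ζ ι : E → E}
    (hl : LeftInverse ι (fun x => x + ζ x)) (hr : RightInverse ι (fun x => x + ζ x)) :
    (⨆ x, ‖ι x - x‖) = ⨆ x, ‖ζ x‖ := by
  simp_rw [sub_eq_neg hr, norm_neg]
  exact hl.surjective.iSup_comp fun y => ‖ζ y‖

variable {𝕜 E : Type*} [RCLike 𝕜] [NormedAddCommGroup E] [NormedSpace 𝕜 E] {ζ ι : E → E} {x : E}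

theorem contDiff_and_hasFDerivAt [CompleteSpace E] {n : WithTop ℕ∞} (hζ : ContDiff 𝕜 n ζ)
    (hn : n ≠ 0) (hunit : ∀ y, IsUnit (1 + fderiv 𝕜 ζ y)) (hl : LeftInverse ι (fun x => x + ζ x))
    (hr : RightInverse ι (fun x => x + ζ x)) :
    ContDiff 𝕜 n ι ∧ ∀ x, HasFDerivAt ι (Ring.inverse (1 + fderiv 𝕜 ζ (ι x))) x := by
  have key : ∀ a, ContDiffAt 𝕜 n ι (a + ζ a) ∧
      HasFDerivAt ι (Ring.inverse (1 + fderiv 𝕜 ζ a)) (a + ζ a) := by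
    intro a
    set e := ContinuousLinearEquiv.unitsEquiv 𝕜 E (hunit a).unit
    have he : HasFDerivAt (fun x => x + ζ x) (e : E →L[𝕜] E) a :=
      (hasFDerivAt_id a).add ((hζ.differentiable hn) a).hasFDerivAt
    have he_symm : (e.symm : E →L[𝕜] E) = Ring.inverse (1 + fderiv 𝕜 ζ a) := by
      conv_rhs => rw [← (hunit a).unit_spec, Ring.inverse_unit]
      rfl
    refine ⟨(contDiff_id.add hζ).contDiffAt.contDiffAt_of_leftInverse he hn hl, ?_⟩
    rw [← he_symm]
    exact ((contDiff_id.add hζ).contDiffAt.hasStrictFDerivAt' he hn).to_local_left_inverse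
      (.of_forall hl) |>.hasFDerivAt
  refine ⟨contDiff_iff_contDiffAt.2 fun x => ?_, fun x => ?_⟩
  · simpa [hr x] using (key (ι x)).1
  · simpa [hr x] using (key (ι x)).2

theorem fderiv_sub_eq (hDι : HasFDerivAt ι (Ring.inverse (1 + fderiv 𝕜 ζ (ι x))) x) :
    fderiv 𝕜 (fun y => ι y - y) x = Ring.inverse (1 + fderiv 𝕜 ζ (ι x)) - 1 :=
  (hDι.sub (hasFDerivAt_id x)).fderiv

theorem norm_fderiv_sub_le (hunit : IsUnit (1 + fderiv 𝕜 ζ (ι x)))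
    (hDι : HasFDerivAt ι (Ring.inverse (1 + fderiv 𝕜 ζ (ι x))) x) :
    ‖fderiv 𝕜 (fun y => ι y - y) x‖ ≤
      ‖Ring.inverse (1 + fderiv 𝕜 ζ (ι x))‖ * ‖fderiv 𝕜 ζ (ι x)‖ := by
  set S := Ring.inverse (1 + fderiv 𝕜 ζ (ι x))
  have h : S - 1 = -(S * fderiv 𝕜 ζ (ι x)) := by
    have := Ring.inverse_mul_cancel _ hunit
    rw [mul_add, mul_one] at this
    rw [← this]
    abel
  rw [fderiv_sub_eq hDι, h, norm_neg]
  exact norm_mul_le _ _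

theorem norm_iteratedFDeriv_le_of_two_le {n : WithTop ℕ∞} {k : ℕ} {A C : ℝ}
    (hζ : ContDiff 𝕜 n ζ) (hι : ContDiff 𝕜 n ι) (hr : RightInverse ι (fun x => x + ζ x))
    (hunit : IsUnit (1 + fderiv 𝕜 ζ (ι x))) (hk : 2 ≤ k) (hkn : k ≤ n) (hA : 1 ≤ A)
    (hζC : ∀ j, 1 ≤ j → j ≤ k → ‖iteratedFDeriv 𝕜 j ζ (ι x)‖ ≤ C)
    (hιA : ∀ j, 1 ≤ j → j < k → ‖iteratedFDeriv 𝕜 j ι x‖ ≤ A) :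
    ‖iteratedFDeriv 𝕜 k ι x‖ ≤ ‖Ring.inverse (1 + fderiv 𝕜 ζ (ι x))‖ *
      (Fintype.card (OrderedFinpartition k) * C * A ^ k) := by
  set T := 1 + fderiv 𝕜 ζ (ι x)
  set P := iteratedFDeriv 𝕜 k ι x
  -- `ζ ∘ ι = id - ι`, so the Faà di Bruno remainder of `ζ ∘ ι` is `-(1 + Dζ(ι x)) ∘ D^k ι`.
  have hcomp : ζ ∘ ι = -fun y => ι y - y := funext fun y => by simp [sub_eq_neg hr y]
  have hrem := norm_iteratedFDeriv_comp_sub_le hζ.contDiffAt hι.contDiffAt (by omega) hkn hA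
    hζC hιA
  rw [hcomp, iteratedFDeriv_neg_apply, iteratedFDeriv_sub_id (hι.contDiffAt.of_le hkn) hk,
    show -P - (fderiv 𝕜 ζ (ι x)).compContinuousMultilinearMap P = -T.compContinuousMultilinearMap P
      by ext v; simp [T]; abel, norm_neg] at hrem
  have hP :
      P = (Ring.inverse T).compContinuousMultilinearMap (T.compContinuousMultilinearMap P) := by
    ext v
    change P v = (Ring.inverse T * T) (P v)
    rw [Ring.inverse_mul_cancel _ hunit]
    rfl
  rw [hP]
  exact ((Ring.inverse T).norm_compContinuousMultilinearMap_le _).trans (by gcongr)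

theorem norm_iteratedFDeriv_sub_le {n : WithTop ℕ∞} {k : ℕ} {A C : ℝ}
    (hζ : ContDiff 𝕜 n ζ) (hι : ContDiff 𝕜 n ι) (hr : RightInverse ι (fun x => x + ζ x))
    (hunit : IsUnit (1 + fderiv 𝕜 ζ (ι x)))
    (hDι : HasFDerivAt ι (Ring.inverse (1 + fderiv 𝕜 ζ (ι x))) x) (hk : 1 ≤ k) (hkn : k ≤ n)
    (hA : 1 ≤ A) (hζC : ∀ j, 1 ≤ j → j ≤ k → ‖iteratedFDeriv 𝕜 j ζ (ι x)‖ ≤ C)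
    (hιA : ∀ j, 1 ≤ j → j < k → ‖iteratedFDeriv 𝕜 j ι x‖ ≤ A) :
    ‖iteratedFDeriv 𝕜 k (fun y => ι y - y) x‖ ≤ ‖Ring.inverse (1 + fderiv 𝕜 ζ (ι x))‖ *
      (Fintype.card (OrderedFinpartition k) * C * A ^ k) := by
  obtain rfl | hk := hk.eq_or_lt
  · have hC := hζC 1 le_rfl le_rfl
    rw [norm_iteratedFDeriv_one] at hC ⊢
    have hcard : 1 ≤ (Fintype.card (OrderedFinpartition 1) : ℝ) := by
      exact_mod_cast Fintype.card_pos
    refine (norm_fderiv_sub_le hunit hDι).trans (mul_le_mul_of_nonneg_left ?_ (norm_nonneg _))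
    have hC0 : 0 ≤ C := (norm_nonneg _).trans hC
    calc ‖fderiv 𝕜 ζ (ι x)‖ ≤ 1 * C * 1 := by simpa using hC
      _ ≤ _ := by gcongr; simpa using hA
  · rw [iteratedFDeriv_sub_id (hι.contDiffAt.of_le hkn) hk]
    exact norm_iteratedFDeriv_le_of_two_le hζ hι hr hunit hk hkn hA hζC hιA

/-- A bound for `‖D^j ι‖`, `1 ≤ j ≤ k`, when `‖(1 + Dζ)⁻¹‖ ≤ B` and `‖D^j ζ‖ ≤ M` for `j ≤ k`:
the recursion is `norm_iteratedFDeriv_le_of_two_le`. -/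
def derivBound (B M : ℝ) : ℕ → ℝ
  | 0 => 1
  | k + 1 => max (derivBound B M k)
      (max B (B * (Fintype.card (OrderedFinpartition (k + 1)) * M * derivBound B M k ^ (k + 1))))

theorem one_le_derivBound (B M : ℝ) : ∀ k, 1 ≤ derivBound B M k
  | 0 => le_rfl
  | k + 1 => (one_le_derivBound B M k).trans (le_max_left _ _)

theorem norm_iteratedFDeriv_le_derivBound {n : WithTop ℕ∞} {B M : ℝ}
    (hζ : ContDiff 𝕜 n ζ) (hι : ContDiff 𝕜 n ι) (hr : RightInverse ι (fun x => x + ζ x))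
    (hunit : ∀ y, IsUnit (1 + fderiv 𝕜 ζ y))
    (hDι : ∀ x, HasFDerivAt ι (Ring.inverse (1 + fderiv 𝕜 ζ (ι x))) x)
    (hB : ∀ y, ‖Ring.inverse (1 + fderiv 𝕜 ζ y)‖ ≤ B) :
    ∀ k : ℕ, k ≤ n → (∀ j ≤ k, ∀ y, ‖iteratedFDeriv 𝕜 j ζ y‖ ≤ M) →
      ∀ j, 1 ≤ j → j ≤ k → ∀ x, ‖iteratedFDeriv 𝕜 j ι x‖ ≤ derivBound B M k
  | 0, _, _, j, hj, hjk, _ => absurd hj (by omega)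
  | k + 1, hkn, hM, j, hj, hjk, x => by
    have IH := norm_iteratedFDeriv_le_derivBound hζ hι hr hunit hDι hB k
      ((WithTop.coe_le_coe.2 (by simp)).trans hkn) fun j hj => hM j (by omega)
    obtain hjk | rfl := hjk.lt_or_eq
    · exact (IH j hj (by omega) x).trans (le_max_left _ _)
    refine le_max_of_le_right ?_
    obtain rfl | hk := Nat.eq_zero_or_pos k
    · rw [norm_iteratedFDeriv_one, (hDι x).fderiv]
      exact le_max_of_le_left (hB _)
    refine le_max_of_le_right ?_
    have hM0 : 0 ≤ M := (norm_nonneg _).trans (hM 0 (Nat.zero_le _) x)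
    have hA := one_le_derivBound B M k
    refine (norm_iteratedFDeriv_le_of_two_le hζ hι hr (hunit _) (by omega) hkn hA
      (fun j _ hj => hM j hj _) fun j hj hjk => IH j hj (by omega) x).trans ?_
    gcongr
    exact hB _

theorem norm_iteratedFDeriv_sub_le_derivBound {n : WithTop ℕ∞} {B M C : ℝ} {m k : ℕ}
    (hζ : ContDiff 𝕜 n ζ) (hι : ContDiff 𝕜 n ι) (hr : RightInverse ι (fun x => x + ζ x))
    (hunit : ∀ y, IsUnit (1 + fderiv 𝕜 ζ y))
    (hDι : ∀ x, HasFDerivAt ι (Ring.inverse (1 + fderiv 𝕜 ζ (ι x))) x)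
    (hB : ∀ y, ‖Ring.inverse (1 + fderiv 𝕜 ζ y)‖ ≤ B) (hmn : m ≤ n)
    (hM : ∀ j ≤ m, ∀ y, ‖iteratedFDeriv 𝕜 j ζ y‖ ≤ M) (hk : 1 ≤ k) (hkm : k ≤ m)
    (hC : ∀ j, 1 ≤ j → j ≤ k → ∀ y, ‖iteratedFDeriv 𝕜 j ζ y‖ ≤ C) (x : E) :
    ‖iteratedFDeriv 𝕜 k (fun y => ι y - y) x‖ ≤
      B * (∑ j ∈ range (m + 1), Fintype.card (OrderedFinpartition j)) *
        derivBound B M m ^ m * C := by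
  set A := derivBound B M m
  have hA : 1 ≤ A := one_le_derivBound B M m
  have hC0 : 0 ≤ C := (norm_nonneg _).trans (hC 1 le_rfl hk x)
  calc _ ≤ ‖Ring.inverse (1 + fderiv 𝕜 ζ (ι x))‖ *
        (Fintype.card (OrderedFinpartition k) * C * A ^ k) :=
        norm_iteratedFDeriv_sub_le hζ hι hr (hunit _) (hDι x) hk
          ((WithTop.coe_le_coe.2 (by exact_mod_cast hkm)).trans hmn) hA
          (fun j hj hjk => hC j hj hjk _) fun j hj hjk =>
            norm_iteratedFDeriv_le_derivBound hζ hι hr hunit hDι hB m hmn hM j hj (by omega) x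
    _ ≤ B * ((∑ j ∈ range (m + 1), Fintype.card (OrderedFinpartition j) : ℕ) * C * A ^ m) := by
        gcongr
        · exact (norm_nonneg _).trans (hB x)
        · exact hB _
        · exact single_le_sum (f := fun j => Fintype.card (OrderedFinpartition j))
            (fun _ _ => Nat.zero_le _) (mem_range.2 (Nat.lt_succ_of_le hkm))
    _ = _ := by push_cast; ring

end InverseOfIdAdd

theorem InverseOfIdAdd.inv_mul_le_abs_det {E : Type*} [NormedAddCommGroup E] [NormedSpace ℝ E]
    {ζ ι : E → E} {x : E} {D c θ : ℝ} (hunit : IsUnit (1 + fderiv ℝ ζ (ι x)))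
    (hDι : HasFDerivAt ι (Ring.inverse (1 + fderiv ℝ ζ (ι x))) x) (hD0 : 0 < D)
    (hD : |(1 + fderiv ℝ ζ (ι x)).det| ≤ D) (hc : c ≤ |(1 + (1 - θ) • fderiv ℝ ζ (ι x)).det|) :
    D⁻¹ * c ≤ |(1 + θ • fderiv ℝ (fun y => ι y - y) x).det| := by
  rw [fderiv_sub_eq hDι]
  have key := ContinuousLinearMap.det_one_add_mul_det_one_add_smul_ringInverse_sub hunit θ
  calc D⁻¹ * c ≤ D⁻¹ * (D * |(1 + θ • (Ring.inverse (1 + fderiv ℝ ζ (ι x)) - 1)).det|) := by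
        gcongr
        rw [← key, abs_mul] at hc
        exact hc.trans (by gcongr)
    _ = _ := by field_simp

section FiniteDimensional

variable {E : Type*} [NormedAddCommGroup E] [NormedSpace ℝ E] [FiniteDimensional ℝ E]

theorem ContinuousLinearMap.isUnit_of_det_ne_zero {T : E →L[ℝ] E} (h : T.det ≠ 0) : IsUnit T :=
  ⟨(T.toContinuousLinearEquivOfDetNeZero h).toUnit, T.coe_toContinuousLinearEquivOfDetNeZero h⟩

theorem exists_abs_det_le (a : ℝ) : ∃ D, 0 < D ∧ ∀ T : E →L[ℝ] E, ‖T‖ ≤ a → |T.det| ≤ D := by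
  obtain ⟨D, hD⟩ := (isCompact_closedBall (0 : E →L[ℝ] E) a).exists_bound_of_continuousOn
    ContinuousLinearMap.continuous_det.continuousOn
  exact ⟨max D 1, by positivity, fun T hT =>
    (hD T (mem_closedBall_zero_iff.2 hT)).trans (le_max_left _ _)⟩

theorem exists_norm_ringInverse_le (a : ℝ) {lam : ℝ} (hlam : 0 < lam) :
    ∃ B, ∀ T : E →L[ℝ] E, ‖T‖ ≤ a → lam ≤ |T.det| → ‖Ring.inverse T‖ ≤ B := by
  have hcpt : IsCompact (Metric.closedBall (0 : E →L[ℝ] E) a ∩ {T | lam ≤ |T.det|}) :=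
    (isCompact_closedBall _ a).inter_right <|
      isClosed_le continuous_const ContinuousLinearMap.continuous_det.abs
  obtain ⟨B, hB⟩ := hcpt.exists_bound_of_continuousOn fun T hT =>
    (NormedRing.inverse_continuousAt (ContinuousLinearMap.isUnit_of_det_ne_zero
      (abs_pos.1 (hlam.trans_le hT.2))).unit).continuousWithinAt
  exact ⟨B, fun T h₁ h₂ => hB T ⟨mem_closedBall_zero_iff.2 h₁, h₂⟩⟩

end FiniteDimensional

/-- let `ζ : ℝ^d → ℝ^d` be `C^m` (`m ≥ 1`) with
`λ ≤ |det(I + θDζ)|` for `θ ∈ [0,1]` and `sup_x ‖D^kζ(x)‖ ≤ M_1` for `k ≤ 1`,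
`≤ M_m` for `k ≤ m`, and let `τ(x) = x + ζ(x)` (a `C^m`-diffeomorphism, with
inverse `ι`).  Then `ζ*(x) = −x + τ^{-1}(x)` is `C^m`,
`sup|ζ*| = sup|ζ|`, `sup|D^k ζ*| ≤ M*_m max_{1≤j≤k} sup|D^j ζ|` for `1 ≤ k ≤ m`
with `M*_m = M*_m(d,λ,M_m)`, and
`inf_{θ∈[0,1]} inf_x |det(I + θDζ*)| ≥ λ' inf_{θ∈[0,1]} inf_x |det(I + θDζ)|`
with `λ' = λ'(d,λ,M_1) > 0`. -/
theorem statement2 (d m : ℕ) (hm : 1 ≤ m) (lam M1 : ℝ) (hlam : 0 < lam) :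
    ∃ lam' : ℝ, 0 < lam' ∧ ∀ Mm : ℝ, ∃ Mstar : ℝ,
      ∀ ζ ι : Rd d → Rd d, ContDiff ℝ (m : ℕ∞) ζ →
        (∀ θ ∈ Set.Icc (0 : ℝ) 1, ∀ x : Rd d,
          lam ≤ |(ContinuousLinearMap.id ℝ (Rd d) + θ • fderiv ℝ ζ x).det|) →
        (∀ k ≤ 1, ∀ x : Rd d, ‖iteratedFDeriv ℝ k ζ x‖ ≤ M1) →
        (∀ k ≤ m, ∀ x : Rd d, ‖iteratedFDeriv ℝ k ζ x‖ ≤ Mm) →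
        Function.LeftInverse ι (fun x => x + ζ x) →
        Function.RightInverse ι (fun x => x + ζ x) →
        -- `ζ* = −x + τ^{-1}(x)`
        (ContDiff ℝ (m : ℕ∞) (fun x : Rd d => ι x - x)) ∧
        ((⨆ x : Rd d, ‖ι x - x‖) = ⨆ x : Rd d, ‖ζ x‖) ∧
        (∀ k, 1 ≤ k → k ≤ m → ∀ C : ℝ,
          (∀ j, 1 ≤ j → j ≤ k → ∀ x : Rd d, ‖iteratedFDeriv ℝ j ζ x‖ ≤ C) →
          ∀ x : Rd d, ‖iteratedFDeriv ℝ k (fun y : Rd d => ι y - y) x‖ ≤ Mstar * C) ∧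
        (∀ c : ℝ,
          (∀ θ ∈ Set.Icc (0 : ℝ) 1, ∀ x : Rd d,
            c ≤ |(ContinuousLinearMap.id ℝ (Rd d) + θ • fderiv ℝ ζ x).det|) →
          ∀ θ ∈ Set.Icc (0 : ℝ) 1, ∀ x : Rd d,
            lam' * c ≤
              |(ContinuousLinearMap.id ℝ (Rd d)
                  + θ • fderiv ℝ (fun y : Rd d => ι y - y) x).det|) := by
  obtain ⟨D, hD0, hD⟩ := exists_abs_det_le (E := Rd d) (1 + M1)
  obtain ⟨B, hB⟩ := exists_norm_ringInverse_le (E := Rd d) (1 + M1) hlam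
  refine ⟨D⁻¹, inv_pos.2 hD0, fun Mm => ⟨B * (∑ j ∈ range (m + 1),
    Fintype.card (OrderedFinpartition j)) * InverseOfIdAdd.derivBound B Mm m ^ m, ?_⟩⟩
  intro ζ ι hζ hdet hM1 hMm hl hr
  simp only [← ContinuousLinearMap.one_def] at hdet ⊢
  have hnorm (y : Rd d) : ‖1 + fderiv ℝ ζ y‖ ≤ 1 + M1 :=
    (norm_add_le _ _).trans <|
      add_le_add ContinuousLinearMap.norm_id_le (by simpa using hM1 1 le_rfl y)
  have hdet1 (y : Rd d) : lam ≤ |(1 + fderiv ℝ ζ y).det| := by simpa using hdet 1 (by simp) y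
  have hunit (y : Rd d) : IsUnit (1 + fderiv ℝ ζ y) :=
    ContinuousLinearMap.isUnit_of_det_ne_zero (abs_pos.1 (hlam.trans_le (hdet1 y)))
  have hinv (y : Rd d) : ‖Ring.inverse (1 + fderiv ℝ ζ y)‖ ≤ B := hB _ (hnorm y) (hdet1 y)
  obtain ⟨hι, hDι⟩ := InverseOfIdAdd.contDiff_and_hasFDerivAt hζ
    (by exact_mod_cast (show m ≠ 0 by omega)) hunit hl hr
  refine ⟨hι.sub contDiff_id, InverseOfIdAdd.iSup_norm_sub_eq hl hr,
    fun k hk hkm C hC x => ?_, fun c hc θ hθ x => ?_⟩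
  · exact InverseOfIdAdd.norm_iteratedFDeriv_sub_le_derivBound hζ hι hr hunit hDι hinv le_rfl hMm
      hk hkm hC x
  · exact InverseOfIdAdd.inv_mul_le_abs_det (hunit _) (hDι x) hD0 (hD _ (hnorm _))
      (hc (1 - θ) ⟨by linarith [hθ.2], by linarith [hθ.1]⟩ _)
end
end

section
/- Let ζ : ℝ^d → ℝ^d be twice continuously differentiable with λ := inf_{θ∈[0,1]} inf_{x∈ℝ^d} |det(I + θ Dζ(x))| > 0 and M_2 := max_{0≤k≤2} sup_{x∈ℝ^d} |D^k ζ(x)| < ∞. Then for each θ ∈ [0,1] the map τ_{θζ}(x) = x + θζ(x) is a C^2-diffeomorphism of ℝ^d, and for all v, φ ∈ C_0^∞(ℝ^d) one has ∫_{ℝ^d} v(x) (I^ζ φ)(x) dx = ∫_{ℝ^d} (I^{ζ*}v)(x) φ(x) dx, where I^{ζ*}v(x) = −∫_0^1 D_i( v(τ_{θζ}^{-1}(x)) ζ^i(τ_{θζ}^{-1}(x)) |det Dτ_{θζ}^{-1}(x)| ) dθ (summation over i = 1,…,d). -/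
open MeasureTheory Real

noncomputable section

set_option linter.unusedSectionVars false
/-- Partial derivative in the `i`-th coordinate direction. -/
def pderiv' {d : ℕ} (i : Fin d) (f : Rd d → ℝ) : Rd d → ℝ :=
  fun x => fderiv ℝ f x (EuclideanSpace.single i 1)

namespace S4
variable {d : ℕ} {lam M2 : ℝ} {ζ : Rd d → Rd d}

def A (ζ : Rd d → Rd d) (θ : ℝ) (x : Rd d) : Rd d →L[ℝ] Rd d :=
  ContinuousLinearMap.id ℝ (Rd d) + θ • fderiv ℝ ζ x

lemma hasFDerivAt_tau (hζ : ContDiff ℝ 2 ζ) (θ : ℝ) (x : Rd d) :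
    HasFDerivAt (fun x => x + θ • ζ x) (A ζ θ x) x := by
  have h1 : HasFDerivAt ζ (fderiv ℝ ζ x) x :=
    (hζ.differentiable (by norm_num) x).hasFDerivAt
  exact (hasFDerivAt_id x).add (h1.const_smul θ)

lemma contDiff_tau (hζ : ContDiff ℝ 2 ζ) (θ : ℝ) :
    ContDiff ℝ 2 (fun x : Rd d => x + θ • ζ x) :=
  contDiff_id.add (hζ.const_smul θ)

lemma det_A_pos (hlam : 0 < lam)
    (hdet : ∀ θ ∈ Set.Icc (0 : ℝ) 1, ∀ x : Rd d,
      lam ≤ |(ContinuousLinearMap.id ℝ (Rd d) + θ • fderiv ℝ ζ x).det|)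
    {θ : ℝ} (hθ : θ ∈ Set.Icc (0 : ℝ) 1) (x : Rd d) :
    lam ≤ (A ζ θ x).det := by
  have hdet' : ∀ s ∈ Set.Icc (0:ℝ) 1, lam ≤ |(A ζ s x).det| := fun s hs => hdet s hs x
  have hc : Continuous fun s : ℝ => (A ζ s x).det :=
    ContinuousLinearMap.continuous_det.comp
      (continuous_const.add (continuous_id.smul continuous_const))
  by_contra hlt
  push_neg at hlt
  have habs := hdet' θ hθ
  have hneg : (A ζ θ x).det ≤ -lam := by
    rcases abs_cases ((A ζ θ x).det) with ⟨h1, h2⟩ | ⟨h1, h2⟩ <;> linarith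
  have h0 : (A ζ 0 x).det = 1 := by
    simp [A, ContinuousLinearMap.det]
  obtain ⟨s, hs, hs0⟩ : (0:ℝ) ∈ (fun s => (A ζ s x).det) '' Set.Icc 0 θ := by
    apply intermediate_value_Icc' hθ.1 hc.continuousOn
    constructor <;> [linarith; linarith]
  have : lam ≤ |(A ζ s x).det| :=
    hdet' s ⟨hs.1, hs.2.trans hθ.2⟩
  simp only at hs0
  rw [hs0] at this
  simp at this
  linarith

lemma contDiff_iota
    (hlam : 0 < lam) (hζ : ContDiff ℝ 2 ζ)
    (hdet : ∀ θ ∈ Set.Icc (0 : ℝ) 1, ∀ x : Rd d,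
      lam ≤ |(ContinuousLinearMap.id ℝ (Rd d) + θ • fderiv ℝ ζ x).det|)
    {ι : ℝ → Rd d → Rd d}
    (hιl : ∀ θ ∈ Set.Icc (0 : ℝ) 1, Function.LeftInverse (ι θ) (fun x => x + θ • ζ x))
    (hιr : ∀ θ ∈ Set.Icc (0 : ℝ) 1, Function.RightInverse (ι θ) (fun x => x + θ • ζ x))
    {θ : ℝ} (hθ : θ ∈ Set.Icc (0 : ℝ) 1) :
    ContDiff ℝ 2 (ι θ) := by
  set τ : Rd d → Rd d := fun x => x + θ • ζ x with hτdef
  have hτ : ContDiff ℝ 2 τ := contDiff_tau hζ θ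
  rw [contDiff_iff_contDiffAt]
  intro y
  -- y = τ (ι θ y)
  have hy : τ (ι θ y) = y := hιr θ hθ y
  set a : Rd d := ι θ y with ha
  have hdetne : (A ζ θ a).det ≠ 0 := ne_of_gt (lt_of_lt_of_le hlam (det_A_pos hlam hdet hθ a))
  set e : Rd d ≃L[ℝ] Rd d := (A ζ θ a).toContinuousLinearEquivOfDetNeZero hdetne with he
  have hce : (e : Rd d →L[ℝ] Rd d) = A ζ θ a := rfl
  have hfd : HasFDerivAt τ (e : Rd d →L[ℝ] Rd d) a := by
    rw [hce]; exact hasFDerivAt_tau hζ θ a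
  have hca : ContDiffAt ℝ 2 τ a := hτ.contDiffAt
  have h2 : (2 : WithTop ℕ∞) ≠ 0 := two_ne_zero
  have hloc := hca.to_localInverse (f' := e) hfd h2
  rw [hy] at hloc
  apply hloc.congr_of_eventuallyEq
  -- ι θ = localInverse near y
  have hev : ∀ᶠ z in nhds y, τ (hca.localInverse hfd h2 z) = z := by
    have := (hca.hasStrictFDerivAt' hfd h2).eventually_right_inverse
    rw [hy] at this
    exact this
  filter_upwards [hev] with z hz
  calc ι θ z = ι θ (τ (hca.localInverse hfd h2 z)) := by rw [hz]
    _ = hca.localInverse hfd h2 z := hιl θ hθ _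

section Frag
variable (hlam : 0 < lam) (hζ : ContDiff ℝ 2 ζ)
    (hdet : ∀ θ ∈ Set.Icc (0 : ℝ) 1, ∀ x : Rd d,
      lam ≤ |(ContinuousLinearMap.id ℝ (Rd d) + θ • fderiv ℝ ζ x).det|)
    {ι : ℝ → Rd d → Rd d}
    (hιl : ∀ θ ∈ Set.Icc (0 : ℝ) 1, Function.LeftInverse (ι θ) (fun x => x + θ • ζ x))
    (hιr : ∀ θ ∈ Set.Icc (0 : ℝ) 1, Function.RightInverse (ι θ) (fun x => x + θ • ζ x))

include hlam hζ hdet hιl hιr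

lemma fderiv_iota_comp {θ : ℝ} (hθ : θ ∈ Set.Icc (0 : ℝ) 1) (y : Rd d) :
    (fderiv ℝ (ι θ) y).comp (A ζ θ (ι θ y)) = ContinuousLinearMap.id ℝ (Rd d) ∧
    (A ζ θ (ι θ y)).comp (fderiv ℝ (ι θ) y) = ContinuousLinearMap.id ℝ (Rd d) := by
  have hι2 : ContDiff ℝ 2 (ι θ) := contDiff_iota hlam hζ hdet hιl hιr hθ
  set x : Rd d := ι θ y with hx
  have hy : x + θ • ζ x = y := hιr θ hθ y
  have hιd : HasFDerivAt (ι θ) (fderiv ℝ (ι θ) y) y :=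
    (hι2.differentiable two_ne_zero y).hasFDerivAt
  constructor
  · -- (ι ∘ τ) = id at x
    have hιd' : HasFDerivAt (ι θ) (fderiv ℝ (ι θ) y) (x + θ • ζ x) := by
      rw [hy]; exact hιd
    have hcomp : HasFDerivAt (fun z => ι θ (z + θ • ζ z))
        ((fderiv ℝ (ι θ) y).comp (A ζ θ x)) x :=
      hιd'.comp x (hasFDerivAt_tau hζ θ x)
    have hid : HasFDerivAt (fun z : Rd d => ι θ (z + θ • ζ z))
        (ContinuousLinearMap.id ℝ (Rd d)) x := by
      have : (fun z : Rd d => ι θ (z + θ • ζ z)) = fun z => z := funext fun z => hιl θ hθ z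
      rw [this]; exact hasFDerivAt_id x
    exact hcomp.unique hid
  · -- (τ ∘ ι) = id at y
    have hcomp : HasFDerivAt (fun w => ι θ w + θ • ζ (ι θ w))
        ((A ζ θ x).comp (fderiv ℝ (ι θ) y)) y :=
      (hasFDerivAt_tau hζ θ x).comp y hιd
    have hid : HasFDerivAt (fun w : Rd d => ι θ w + θ • ζ (ι θ w))
        (ContinuousLinearMap.id ℝ (Rd d)) y := by
      have : (fun w : Rd d => ι θ w + θ • ζ (ι θ w)) = fun w => w :=
        funext fun w => hιr θ hθ w
      rw [this]; exact hasFDerivAt_id y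
    exact hcomp.unique hid

lemma det_fderiv_iota {θ : ℝ} (hθ : θ ∈ Set.Icc (0 : ℝ) 1) (y : Rd d) :
    (fderiv ℝ (ι θ) y).det = ((A ζ θ (ι θ y)).det)⁻¹ := by
  obtain ⟨h1, -⟩ := fderiv_iota_comp hlam hζ hdet hιl hιr hθ y
  have : (fderiv ℝ (ι θ) y).det * (A ζ θ (ι θ y)).det = 1 := by
    have := congrArg ContinuousLinearMap.det h1
    simpa [ContinuousLinearMap.det, ContinuousLinearMap.coe_comp, LinearMap.det_comp] using this
  exact eq_inv_of_mul_eq_one_left this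

lemma abs_det_fderiv_iota {θ : ℝ} (hθ : θ ∈ Set.Icc (0 : ℝ) 1) (y : Rd d) :
    |(fderiv ℝ (ι θ) y).det| = ((A ζ θ (ι θ y)).det)⁻¹ := by
  rw [det_fderiv_iota hlam hζ hdet hιl hιr hθ y, abs_of_pos]
  exact inv_pos.mpr (lt_of_lt_of_le hlam (det_A_pos hlam hdet hθ _))

end Frag


lemma iota_continuousOn (hM0 : ∀ x : Rd d, ‖ζ x‖ ≤ M2)
    {ι : ℝ → Rd d → Rd d} (hζ : ContDiff ℝ 2 ζ) (hlam : 0 < lam)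
    (hdet : ∀ θ ∈ Set.Icc (0 : ℝ) 1, ∀ x : Rd d,
      lam ≤ |(ContinuousLinearMap.id ℝ (Rd d) + θ • fderiv ℝ ζ x).det|)
    (hιl : ∀ θ ∈ Set.Icc (0 : ℝ) 1, Function.LeftInverse (ι θ) (fun x => x + θ • ζ x))
    (hιr : ∀ θ ∈ Set.Icc (0 : ℝ) 1, Function.RightInverse (ι θ) (fun x => x + θ • ζ x)) :
    ContinuousOn (fun p : ℝ × Rd d => ι p.1 p.2)
      (Set.Icc (0:ℝ) 1 ×ˢ (Set.univ : Set (Rd d))) := by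
  intro p₀ hp₀
  obtain ⟨hθ₀, -⟩ := hp₀
  set θ₀ := p₀.1
  set y₀ := p₀.2
  set S := Set.Icc (0:ℝ) 1 ×ˢ (Set.univ : Set (Rd d)) with hS
  have key : ∀ p ∈ S, ι p.1 p.2 = ι θ₀ (p.2 + (θ₀ - p.1) • ζ (ι p.1 p.2)) := by
    rintro ⟨θ, y⟩ ⟨hθ, -⟩
    have h1 : ι θ y + θ • ζ (ι θ y) = y := hιr θ hθ y
    have h2 : ι θ y + θ₀ • ζ (ι θ y) = y + (θ₀ - θ) • ζ (ι θ y) := by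
      have h3 : y + (θ₀ - θ) • ζ (ι θ y) = (ι θ y + θ • ζ (ι θ y)) + (θ₀ - θ) • ζ (ι θ y) := by
        rw [h1]
      rw [h3, sub_smul]; abel
    have := hιl θ₀ hθ₀ (ι θ y)
    simp only at this
    rw [h2] at this
    exact this.symm
  have hg : Filter.Tendsto (fun p : ℝ × Rd d => p.2 + (θ₀ - p.1) • ζ (ι p.1 p.2))
      (nhdsWithin p₀ S) (nhds y₀) := by
    have h2' : Filter.Tendsto (fun p : ℝ × Rd d => (θ₀ - p.1) • ζ (ι p.1 p.2))
        (nhdsWithin p₀ S) (nhds 0) := by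
      have hb : ∀ p : ℝ × Rd d, ‖(θ₀ - p.1) • ζ (ι p.1 p.2)‖ ≤ |θ₀ - p.1| * M2 := by
        intro p
        rw [norm_smul, Real.norm_eq_abs]
        exact mul_le_mul_of_nonneg_left (hM0 _) (abs_nonneg _)
      have hg0 : Filter.Tendsto (fun p : ℝ × Rd d => |θ₀ - p.1| * M2)
          (nhdsWithin p₀ S) (nhds 0) := by
        have : Filter.Tendsto (fun p : ℝ × Rd d => |θ₀ - p.1| * M2)
            (nhds p₀) (nhds (|θ₀ - θ₀| * M2)) :=
          Filter.Tendsto.mul_const _ ((continuous_const.sub continuous_fst).abs.tendsto p₀)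
        simpa using this.mono_left nhdsWithin_le_nhds
      exact squeeze_zero_norm hb hg0
    have h1' : Filter.Tendsto (fun p : ℝ × Rd d => p.2) (nhdsWithin p₀ S) (nhds y₀) :=
      continuous_snd.continuousAt.tendsto.mono_left nhdsWithin_le_nhds
    simpa using h1'.add h2'
  have hι₀ : Continuous (ι θ₀) := (contDiff_iota hlam hζ hdet hιl hιr hθ₀).continuous
  have : Filter.Tendsto (fun p : ℝ × Rd d => ι θ₀ (p.2 + (θ₀ - p.1) • ζ (ι p.1 p.2)))
      (nhdsWithin p₀ S) (nhds (ι θ₀ y₀)) := (hι₀.tendsto y₀).comp hg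
  apply this.congr'
  exact Filter.eventuallyEq_of_mem self_mem_nhdsWithin fun p hp => (key p hp).symm


lemma fderiv_iota_eq_inverse (hlam : 0 < lam) (hζ : ContDiff ℝ 2 ζ)
    (hdet : ∀ θ ∈ Set.Icc (0 : ℝ) 1, ∀ x : Rd d,
      lam ≤ |(ContinuousLinearMap.id ℝ (Rd d) + θ • fderiv ℝ ζ x).det|)
    {ι : ℝ → Rd d → Rd d}
    (hιl : ∀ θ ∈ Set.Icc (0 : ℝ) 1, Function.LeftInverse (ι θ) (fun x => x + θ • ζ x))
    (hιr : ∀ θ ∈ Set.Icc (0 : ℝ) 1, Function.RightInverse (ι θ) (fun x => x + θ • ζ x))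
    {θ : ℝ} (hθ : θ ∈ Set.Icc (0 : ℝ) 1) (y : Rd d) :
    fderiv ℝ (ι θ) y = Ring.inverse (A ζ θ (ι θ y)) := by
  obtain ⟨h1, h2⟩ := fderiv_iota_comp hlam hζ hdet hιl hιr hθ y
  have u : (Rd d →L[ℝ] Rd d)ˣ :=
    ⟨A ζ θ (ι θ y), fderiv ℝ (ι θ) y, h2, h1⟩
  exact (Ring.inverse_unit ⟨A ζ θ (ι θ y), fderiv ℝ (ι θ) y, h2, h1⟩).symm

lemma B_continuousOn (hlam : 0 < lam) (hζ : ContDiff ℝ 2 ζ) (hM0 : ∀ x : Rd d, ‖ζ x‖ ≤ M2)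
    (hdet : ∀ θ ∈ Set.Icc (0 : ℝ) 1, ∀ x : Rd d,
      lam ≤ |(ContinuousLinearMap.id ℝ (Rd d) + θ • fderiv ℝ ζ x).det|)
    {ι : ℝ → Rd d → Rd d}
    (hιl : ∀ θ ∈ Set.Icc (0 : ℝ) 1, Function.LeftInverse (ι θ) (fun x => x + θ • ζ x))
    (hιr : ∀ θ ∈ Set.Icc (0 : ℝ) 1, Function.RightInverse (ι θ) (fun x => x + θ • ζ x)) :
    ContinuousOn (fun p : ℝ × Rd d => fderiv ℝ (ι p.1) p.2)
      (Set.Icc (0:ℝ) 1 ×ˢ (Set.univ : Set (Rd d))) := by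
  have hιc := iota_continuousOn hM0 hζ hlam hdet hιl hιr
  have hAc : ContinuousOn (fun p : ℝ × Rd d => A ζ p.1 (ι p.1 p.2))
      (Set.Icc (0:ℝ) 1 ×ˢ (Set.univ : Set (Rd d))) := by
    have hfc : Continuous (fderiv ℝ ζ) := hζ.continuous_fderiv two_ne_zero
    apply ContinuousOn.add continuousOn_const
    exact (continuousOn_fst).smul (hfc.comp_continuousOn hιc)
  apply ContinuousOn.congr (f := fun p : ℝ × Rd d => Ring.inverse (A ζ p.1 (ι p.1 p.2)))
  · intro p hp
    obtain ⟨h1, h2⟩ := fderiv_iota_comp hlam hζ hdet hιl hιr hp.1 p.2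
    have hct : ContinuousAt (Ring.inverse : (Rd d →L[ℝ] Rd d) → _) (A ζ p.1 (ι p.1 p.2)) :=
      NormedRing.inverse_continuousAt ⟨A ζ p.1 (ι p.1 p.2), fderiv ℝ (ι p.1) p.2, h2, h1⟩
    show ContinuousWithinAt ((Ring.inverse : (Rd d →L[ℝ] Rd d) → _) ∘
        (fun p : ℝ × Rd d => A ζ p.1 (ι p.1 p.2)))
      (Set.Icc (0:ℝ) 1 ×ˢ (Set.univ : Set (Rd d))) p
    exact ContinuousAt.comp_continuousWithinAt
      (f := fun p : ℝ × Rd d => A ζ p.1 (ι p.1 p.2)) hct (hAc p hp)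
  · intro p hp
    exact fderiv_iota_eq_inverse hlam hζ hdet hιl hιr hp.1 p.2


lemma contDiff_clm_det {E : Type*} [NormedAddCommGroup E] [NormedSpace ℝ E]
    {n : WithTop ℕ∞} {f : E → (Rd d →L[ℝ] Rd d)} (hf : ContDiff ℝ n f) :
    ContDiff ℝ n (fun x => (f x).det) := by
  classical
  set b : Module.Basis (Fin d) ℝ (Rd d) := (EuclideanSpace.basisFun (Fin d) ℝ).toBasis with hb
  have key : ∀ x, (f x).det
      = ∑ σ : Equiv.Perm (Fin d), Equiv.Perm.sign σ •
          ∏ i, LinearMap.toMatrix b b (↑(f x) : Rd d →ₗ[ℝ] Rd d) (σ i) i := by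
    intro x
    rw [ContinuousLinearMap.det, ← LinearMap.det_toMatrix b, Matrix.det_apply]
  have : (fun x => (f x).det) = fun x => ∑ σ : Equiv.Perm (Fin d),
      Equiv.Perm.sign σ • ∏ i, LinearMap.toMatrix b b (↑(f x) : Rd d →ₗ[ℝ] Rd d) (σ i) i :=
    funext key
  rw [this]
  apply ContDiff.sum
  intro σ _
  have hentry : ∀ (i j : Fin d), ContDiff ℝ n
      (fun x => LinearMap.toMatrix b b (↑(f x) : Rd d →ₗ[ℝ] Rd d) i j) := by
    intro i j
    let L : (Rd d →L[ℝ] Rd d) →ₗ[ℝ] ℝ :=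
      { toFun := fun g => LinearMap.toMatrix b b (↑g : Rd d →ₗ[ℝ] Rd d) i j
        map_add' := by intro g h; simp
        map_smul' := by intro c g; simp }
    exact (L.toContinuousLinearMap.contDiff).comp hf
  have hp : ContDiff ℝ n
      (fun x => ∏ i, LinearMap.toMatrix b b (↑(f x) : Rd d →ₗ[ℝ] Rd d) (σ i) i) :=
    contDiff_prod fun i _ => hentry (σ i) i
  have hsm : ∀ r : ℝ, Equiv.Perm.sign σ • r = ((Equiv.Perm.sign σ : ℤ) : ℝ) * r := by
    intro r; rw [Units.smul_def, zsmul_eq_mul]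
  simp only [hsm]
  exact contDiff_const.mul hp


lemma apply_eq_sum (L : Rd d →L[ℝ] ℝ) (u : Rd d) :
    L u = ∑ i, u i * L (EuclideanSpace.single i 1) := by
  conv_lhs => rw [← OrthonormalBasis.sum_repr (EuclideanSpace.basisFun (Fin d) ℝ) u]
  rw [map_sum]
  apply Finset.sum_congr rfl
  intro i _
  rw [_root_.map_smul, EuclideanSpace.basisFun_repr, smul_eq_mul, EuclideanSpace.basisFun_apply]

/-- The transported integrand. -/
def G (ζ : Rd d → Rd d) (v : Rd d → ℝ) (θ : ℝ) (i : Fin d) (x : Rd d) : ℝ :=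
  v x * ζ x i * ((A ζ θ x).det)⁻¹

lemma contDiff_A_x (hζ : ContDiff ℝ 2 ζ) (θ : ℝ) :
    ContDiff ℝ 1 (fun x : Rd d => A ζ θ x) :=
  contDiff_const.add ((hζ.fderiv_right (by norm_num)).const_smul θ)

lemma contDiff_G (hlam : 0 < lam) (hζ : ContDiff ℝ 2 ζ)
    (hdet : ∀ θ ∈ Set.Icc (0 : ℝ) 1, ∀ x : Rd d,
      lam ≤ |(ContinuousLinearMap.id ℝ (Rd d) + θ • fderiv ℝ ζ x).det|)
    {v : Rd d → ℝ} (hv : ContDiff ℝ 1 v)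
    {θ : ℝ} (hθ : θ ∈ Set.Icc (0 : ℝ) 1) (i : Fin d) :
    ContDiff ℝ 1 (G ζ v θ i) := by
  apply ContDiff.mul
  · apply hv.mul
    have := ((EuclideanSpace.proj (𝕜 := ℝ) i).contDiff).comp (hζ.of_le (one_le_two :
      (1 : WithTop ℕ∞) ≤ 2))
    simpa [Function.comp_def] using this
  · exact (contDiff_clm_det (contDiff_A_x hζ θ)).inv
      fun x => ne_of_gt (lt_of_lt_of_le hlam (det_A_pos hlam hdet hθ x))

section PerTheta

variable (hlam : 0 < lam) (hζ : ContDiff ℝ 2 ζ)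
    (hdet : ∀ θ ∈ Set.Icc (0 : ℝ) 1, ∀ x : Rd d,
      lam ≤ |(ContinuousLinearMap.id ℝ (Rd d) + θ • fderiv ℝ ζ x).det|)
    {ι : ℝ → Rd d → Rd d}
    (hιl : ∀ θ ∈ Set.Icc (0 : ℝ) 1, Function.LeftInverse (ι θ) (fun x => x + θ • ζ x))
    (hιr : ∀ θ ∈ Set.Icc (0 : ℝ) 1, Function.RightInverse (ι θ) (fun x => x + θ • ζ x))
    {v φ : Rd d → ℝ} (hv : ContDiff ℝ 1 v) (hvs : HasCompactSupport v)
    (hφ : ContDiff ℝ 1 φ) (hφs : HasCompactSupport φ)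

include hlam hζ hdet hιl hιr

lemma F_eq {θ : ℝ} (hθ : θ ∈ Set.Icc (0 : ℝ) 1) (i : Fin d) :
    (fun y => v (ι θ y) * ζ (ι θ y) i * |(fderiv ℝ (ι θ) y).det|)
      = fun y => G ζ v θ i (ι θ y) := by
  funext y
  rw [abs_det_fderiv_iota hlam hζ hdet hιl hιr hθ y]
  rfl

include hv hvs hφ hφs

lemma contDiff_Fcomp {θ : ℝ} (hθ : θ ∈ Set.Icc (0 : ℝ) 1) (i : Fin d) :
    ContDiff ℝ 1 (fun y => G ζ v θ i (ι θ y)) :=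
  (contDiff_G hlam hζ hdet hv hθ i).comp
    ((contDiff_iota hlam hζ hdet hιl hιr hθ).of_le one_le_two)

lemma hcs_Fcomp {θ : ℝ} (hθ : θ ∈ Set.Icc (0 : ℝ) 1) (i : Fin d) :
    HasCompactSupport (fun y => G ζ v θ i (ι θ y)) := by
  apply HasCompactSupport.intro (hvs.image (contDiff_tau hζ θ).continuous)
  intro y hy
  have hv0 : v (ι θ y) = 0 := by
    apply image_eq_zero_of_notMem_tsupport
    intro hmem
    exact hy ⟨ι θ y, hmem, hιr θ hθ y⟩
  simp [G, hv0]

lemma ibp_i {θ : ℝ} (hθ : θ ∈ Set.Icc (0 : ℝ) 1) (i : Fin d) :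
    ∫ y : Rd d, fderiv ℝ (fun y => G ζ v θ i (ι θ y)) y (EuclideanSpace.single i 1) * φ y
      = -∫ y : Rd d, G ζ v θ i (ι θ y) * fderiv ℝ φ y (EuclideanSpace.single i 1) := by
  have hF1 : ContDiff ℝ 1 (fun y => G ζ v θ i (ι θ y)) :=
    contDiff_Fcomp hlam hζ hdet hιl hιr hv hvs hφ hφs hθ i
  have hFs : HasCompactSupport (fun y => G ζ v θ i (ι θ y)) :=
    hcs_Fcomp hlam hζ hdet hιl hιr hv hvs hφ hφs hθ i
  have hFc : Continuous (fun y => G ζ v θ i (ι θ y)) := hF1.continuous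
  have hDFc : Continuous (fun y => fderiv ℝ (fun y => G ζ v θ i (ι θ y)) y
      (EuclideanSpace.single i 1)) :=
    (hF1.continuous_fderiv one_ne_zero).clm_apply continuous_const
  have hDφc : Continuous (fun y => fderiv ℝ φ y (EuclideanSpace.single i 1)) :=
    (hφ.continuous_fderiv one_ne_zero).clm_apply continuous_const
  have h1 : Integrable (fun y : Rd d =>
      fderiv ℝ (fun y => G ζ v θ i (ι θ y)) y (EuclideanSpace.single i 1) * φ y) volume :=
    (hDFc.mul hφ.continuous).integrable_of_hasCompactSupport (hφs.mul_left)
  have h2 : Integrable (fun y : Rd d =>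
      G ζ v θ i (ι θ y) * fderiv ℝ φ y (EuclideanSpace.single i 1)) volume :=
    (hFc.mul hDφc).integrable_of_hasCompactSupport (hFs.mul_right)
  have h3 : Integrable (fun y : Rd d => G ζ v θ i (ι θ y) * φ y) volume :=
    (hFc.mul hφ.continuous).integrable_of_hasCompactSupport (hFs.mul_right)
  have := integral_mul_fderiv_eq_neg_fderiv_mul_of_integrable h1 h2 h3
    (fun x _ => hF1.differentiable one_ne_zero x) (fun x _ => hφ.differentiable one_ne_zero x)
  rw [this, neg_neg]

end PerTheta


section PerTheta2

variable (hlam : 0 < lam) (hζ : ContDiff ℝ 2 ζ)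
    (hdet : ∀ θ ∈ Set.Icc (0 : ℝ) 1, ∀ x : Rd d,
      lam ≤ |(ContinuousLinearMap.id ℝ (Rd d) + θ • fderiv ℝ ζ x).det|)
    {ι : ℝ → Rd d → Rd d}
    (hιl : ∀ θ ∈ Set.Icc (0 : ℝ) 1, Function.LeftInverse (ι θ) (fun x => x + θ • ζ x))
    (hιr : ∀ θ ∈ Set.Icc (0 : ℝ) 1, Function.RightInverse (ι θ) (fun x => x + θ • ζ x))
    {v φ : Rd d → ℝ} (hv : ContDiff ℝ 1 v) (hvs : HasCompactSupport v)
    (hφ : ContDiff ℝ 1 φ) (hφs : HasCompactSupport φ)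

include hlam hζ hdet hιl hιr

lemma cov {θ : ℝ} (hθ : θ ∈ Set.Icc (0 : ℝ) 1) (g : Rd d → ℝ) :
    ∫ y : Rd d, g y = ∫ x : Rd d, |(A ζ θ x).det| • g (x + θ • ζ x) := by
  have hinj : Set.InjOn (fun x : Rd d => x + θ • ζ x) Set.univ := by
    intro a _ b _ hab
    have := congrArg (ι θ) hab
    simp only at this
    rwa [hιl θ hθ a, hιl θ hθ b] at this
  have hsurj : Function.Surjective (fun x : Rd d => x + θ • ζ x) :=
    fun y => ⟨ι θ y, hιr θ hθ y⟩
  have h := integral_image_eq_integral_abs_det_fderiv_smul volume MeasurableSet.univ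
    (fun x _ => (hasFDerivAt_tau hζ θ x).hasFDerivWithinAt) hinj g
  rw [Set.image_univ, hsurj.range_eq, MeasureTheory.setIntegral_univ,
    MeasureTheory.setIntegral_univ] at h
  exact h

include hv hvs hφ hφs

lemma key_theta {θ : ℝ} (hθ : θ ∈ Set.Icc (0 : ℝ) 1) :
    ∫ y : Rd d, (∑ i, fderiv ℝ
        (fun y' => v (ι θ y') * ζ (ι θ y') i * |(fderiv ℝ (ι θ) y').det|) y
        (EuclideanSpace.single i 1)) * φ y
      = -∫ x : Rd d, v x * fderiv ℝ φ (x + θ • ζ x) (ζ x) := by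
  have hFeq : ∀ i : Fin d,
      (fun y => v (ι θ y) * ζ (ι θ y) i * |(fderiv ℝ (ι θ) y).det|)
        = fun y => G ζ v θ i (ι θ y) :=
    fun i => F_eq hlam hζ hdet hιl hιr hθ i
  -- integrability facts
  have hintDF : ∀ i : Fin d, Integrable (fun y : Rd d =>
      fderiv ℝ (fun y' => G ζ v θ i (ι θ y')) y (EuclideanSpace.single i 1) * φ y) volume := by
    intro i
    have hF1 := contDiff_Fcomp hlam hζ hdet hιl hιr hv hvs hφ hφs hθ i
    exact (((hF1.continuous_fderiv one_ne_zero).clm_apply continuous_const).mul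
      hφ.continuous).integrable_of_hasCompactSupport hφs.mul_left
  have hintFD : ∀ i : Fin d, Integrable (fun y : Rd d =>
      G ζ v θ i (ι θ y) * fderiv ℝ φ y (EuclideanSpace.single i 1)) volume := by
    intro i
    have hF1 := contDiff_Fcomp hlam hζ hdet hιl hιr hv hvs hφ hφs hθ i
    have hFs := hcs_Fcomp hlam hζ hdet hιl hιr hv hvs hφ hφs hθ i
    exact (hF1.continuous.mul ((hφ.continuous_fderiv one_ne_zero).clm_apply
      continuous_const)).integrable_of_hasCompactSupport hFs.mul_right
  calc ∫ y : Rd d, (∑ i, fderiv ℝ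
        (fun y' => v (ι θ y') * ζ (ι θ y') i * |(fderiv ℝ (ι θ) y').det|) y
        (EuclideanSpace.single i 1)) * φ y
      = ∫ y : Rd d, ∑ i, fderiv ℝ (fun y' => G ζ v θ i (ι θ y')) y
          (EuclideanSpace.single i 1) * φ y := by
        congr 1
        funext y
        rw [Finset.sum_mul]
        apply Finset.sum_congr rfl
        intro i _
        rw [hFeq i]
    _ = ∑ i, ∫ y : Rd d, fderiv ℝ (fun y' => G ζ v θ i (ι θ y')) y
          (EuclideanSpace.single i 1) * φ y := integral_finset_sum _ fun i _ => hintDF i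
    _ = ∑ i, -∫ y : Rd d, G ζ v θ i (ι θ y) *
          fderiv ℝ φ y (EuclideanSpace.single i 1) := by
        apply Finset.sum_congr rfl
        intro i _
        exact ibp_i hlam hζ hdet hιl hιr hv hvs hφ hφs hθ i
    _ = -∫ y : Rd d, ∑ i, G ζ v θ i (ι θ y) *
          fderiv ℝ φ y (EuclideanSpace.single i 1) := by
        rw [integral_finset_sum _ fun i _ => hintFD i, ← Finset.sum_neg_distrib]
    _ = -∫ y : Rd d, (v (ι θ y) * fderiv ℝ φ y (ζ (ι θ y))) *
          ((A ζ θ (ι θ y)).det)⁻¹ := by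
        congr 1
        congr 1
        funext y
        rw [apply_eq_sum (fderiv ℝ φ y) (ζ (ι θ y))]
        rw [Finset.mul_sum, Finset.sum_mul]
        apply Finset.sum_congr rfl
        intro i _
        simp only [G]
        ring
    _ = -∫ x : Rd d, |(A ζ θ x).det| •
          ((v (ι θ (x + θ • ζ x)) * fderiv ℝ φ (x + θ • ζ x) (ζ (ι θ (x + θ • ζ x)))) *
            ((A ζ θ (ι θ (x + θ • ζ x))).det)⁻¹) := by
        rw [← cov hlam hζ hdet hιl hιr hθ
          (fun y => (v (ι θ y) * fderiv ℝ φ y (ζ (ι θ y))) * ((A ζ θ (ι θ y)).det)⁻¹)]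
    _ = -∫ x : Rd d, v x * fderiv ℝ φ (x + θ • ζ x) (ζ x) := by
        congr 1
        congr 1
        funext x
        rw [hιl θ hθ x]
        have hpos : 0 < (A ζ θ x).det := lt_of_lt_of_le hlam (det_A_pos hlam hdet hθ x)
        rw [abs_of_pos hpos, smul_eq_mul]
        field_simp

end PerTheta2


/-- The determinant as a jointly `C¹` function. -/
def Psi (ζ : Rd d → Rd d) : ℝ × Rd d → ℝ := fun p => (A ζ p.1 p.2).det

lemma contDiff_Psi (hζ : ContDiff ℝ 2 ζ) : ContDiff ℝ 1 (Psi (d := d) ζ) := by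
  apply contDiff_clm_det
  show ContDiff ℝ 1 fun p : ℝ × Rd d =>
    ContinuousLinearMap.id ℝ (Rd d) + p.1 • fderiv ℝ ζ p.2
  exact contDiff_const.add
    (contDiff_fst.smul ((hζ.fderiv_right (by norm_num)).comp contDiff_snd))

lemma hasFDerivAt_Psi_snd (hζ : ContDiff ℝ 2 ζ) (θ : ℝ) (x : Rd d) :
    HasFDerivAt (fun x' => Psi ζ (θ, x'))
      ((fderiv ℝ (Psi ζ) (θ, x)).comp
        ((0 : Rd d →L[ℝ] ℝ).prod (ContinuousLinearMap.id ℝ (Rd d)))) x :=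
  (((contDiff_Psi hζ).differentiable one_ne_zero) (θ, x)).hasFDerivAt.comp x
    ((hasFDerivAt_const θ x).prodMk (hasFDerivAt_id x))

lemma fderiv_Fcomp_apply (hlam : 0 < lam) (hζ : ContDiff ℝ 2 ζ)
    (hdet : ∀ θ ∈ Set.Icc (0 : ℝ) 1, ∀ x : Rd d,
      lam ≤ |(ContinuousLinearMap.id ℝ (Rd d) + θ • fderiv ℝ ζ x).det|)
    {ι : ℝ → Rd d → Rd d}
    (hιl : ∀ θ ∈ Set.Icc (0 : ℝ) 1, Function.LeftInverse (ι θ) (fun x => x + θ • ζ x))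
    (hιr : ∀ θ ∈ Set.Icc (0 : ℝ) 1, Function.RightInverse (ι θ) (fun x => x + θ • ζ x))
    {v : Rd d → ℝ} (hv : ContDiff ℝ 1 v)
    {θ : ℝ} (hθ : θ ∈ Set.Icc (0 : ℝ) 1) (i : Fin d) (y : Rd d) :
    fderiv ℝ (fun y' => G ζ v θ i (ι θ y')) y (EuclideanSpace.single i 1)
      = fderiv ℝ v (ι θ y) (fderiv ℝ (ι θ) y (EuclideanSpace.single i 1))
          * ζ (ι θ y) i * (Psi ζ (θ, ι θ y))⁻¹
        + v (ι θ y) * fderiv ℝ ζ (ι θ y) (fderiv ℝ (ι θ) y (EuclideanSpace.single i 1)) i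
          * (Psi ζ (θ, ι θ y))⁻¹
        - v (ι θ y) * ζ (ι θ y) i * ((Psi ζ (θ, ι θ y)) ^ 2)⁻¹
          * fderiv ℝ (Psi ζ) (θ, ι θ y)
              (0, fderiv ℝ (ι θ) y (EuclideanSpace.single i 1)) := by
  set x : Rd d := ι θ y with hx
  set B : Rd d →L[ℝ] Rd d := fderiv ℝ (ι θ) y with hB
  have hBd : HasFDerivAt (ι θ) B y :=
    ((contDiff_iota hlam hζ hdet hιl hιr hθ).differentiable two_ne_zero y).hasFDerivAt
  have hne : Psi ζ (θ, x) ≠ 0 :=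
    ne_of_gt (lt_of_lt_of_le hlam (det_A_pos hlam hdet hθ x))
  have hΨd := hasFDerivAt_Psi_snd hζ θ x
  have hinv : HasFDerivAt (fun x' => (Psi ζ (θ, x'))⁻¹)
      ((-((Psi ζ (θ, x)) ^ 2)⁻¹) •
        ((fderiv ℝ (Psi ζ) (θ, x)).comp
          ((0 : Rd d →L[ℝ] ℝ).prod (ContinuousLinearMap.id ℝ (Rd d))))) x :=
    (hasDerivAt_inv hne).comp_hasFDerivAt x hΨd
  have hvx : HasFDerivAt v (fderiv ℝ v x) x := (hv.differentiable one_ne_zero x).hasFDerivAt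
  have hζx : HasFDerivAt (fun x' => ζ x' i)
      ((EuclideanSpace.proj (𝕜 := ℝ) i).comp (fderiv ℝ ζ x)) x :=
    (EuclideanSpace.proj (𝕜 := ℝ) i).hasFDerivAt.comp x
      (hζ.differentiable two_ne_zero x).hasFDerivAt
  have hmul := (hvx.mul hζx).mul hinv
  have hG : HasFDerivAt (G ζ v θ i)
      ((v x * ζ x i) • ((-((Psi ζ (θ, x)) ^ 2)⁻¹) •
          ((fderiv ℝ (Psi ζ) (θ, x)).comp
            ((0 : Rd d →L[ℝ] ℝ).prod (ContinuousLinearMap.id ℝ (Rd d)))))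
        + (Psi ζ (θ, x))⁻¹ •
          (v x • ((EuclideanSpace.proj (𝕜 := ℝ) i).comp (fderiv ℝ ζ x))
            + ζ x i • fderiv ℝ v x)) x := hmul
  have hFc := hG.comp y hBd
  rw [show (fun y' => G ζ v θ i (ι θ y')) = (G ζ v θ i) ∘ (ι θ) from rfl, hFc.fderiv]
  simp only [ContinuousLinearMap.comp_apply, ContinuousLinearMap.add_apply,
    ContinuousLinearMap.smul_apply, ContinuousLinearMap.prod_apply,
    ContinuousLinearMap.zero_apply, ContinuousLinearMap.coe_id', id_eq,
    PiLp.proj_apply, smul_eq_mul, neg_mul]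
  ring


lemma H_contOn (hlam : 0 < lam) (hζ : ContDiff ℝ 2 ζ) (hM0 : ∀ x : Rd d, ‖ζ x‖ ≤ M2)
    (hdet : ∀ θ ∈ Set.Icc (0 : ℝ) 1, ∀ x : Rd d,
      lam ≤ |(ContinuousLinearMap.id ℝ (Rd d) + θ • fderiv ℝ ζ x).det|)
    {ι : ℝ → Rd d → Rd d}
    (hιl : ∀ θ ∈ Set.Icc (0 : ℝ) 1, Function.LeftInverse (ι θ) (fun x => x + θ • ζ x))
    (hιr : ∀ θ ∈ Set.Icc (0 : ℝ) 1, Function.RightInverse (ι θ) (fun x => x + θ • ζ x))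
    {v : Rd d → ℝ} (hv : ContDiff ℝ 1 v) :
    ContinuousOn (fun p : ℝ × Rd d => ∑ i, fderiv ℝ
        (fun y' => v (ι p.1 y') * ζ (ι p.1 y') i * |(fderiv ℝ (ι p.1) y').det|) p.2
        (EuclideanSpace.single i 1))
      (Set.Icc (0:ℝ) 1 ×ˢ (Set.univ : Set (Rd d))) := by
  set S := Set.Icc (0:ℝ) 1 ×ˢ (Set.univ : Set (Rd d)) with hS
  have hJ : ContinuousOn (fun p : ℝ × Rd d => ι p.1 p.2) S :=
    iota_continuousOn hM0 hζ hlam hdet hιl hιr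
  have hBc : ContinuousOn (fun p : ℝ × Rd d => fderiv ℝ (ι p.1) p.2) S :=
    B_continuousOn hlam hζ hM0 hdet hιl hιr
  apply ContinuousOn.congr (f := fun p : ℝ × Rd d => ∑ i : Fin d,
      (fderiv ℝ v (ι p.1 p.2) (fderiv ℝ (ι p.1) p.2 (EuclideanSpace.single i 1))
          * ζ (ι p.1 p.2) i * (Psi ζ (p.1, ι p.1 p.2))⁻¹
        + v (ι p.1 p.2) * fderiv ℝ ζ (ι p.1 p.2)
            (fderiv ℝ (ι p.1) p.2 (EuclideanSpace.single i 1)) i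
          * (Psi ζ (p.1, ι p.1 p.2))⁻¹
        - v (ι p.1 p.2) * ζ (ι p.1 p.2) i * ((Psi ζ (p.1, ι p.1 p.2)) ^ 2)⁻¹
          * fderiv ℝ (Psi ζ) (p.1, ι p.1 p.2)
              (0, fderiv ℝ (ι p.1) p.2 (EuclideanSpace.single i 1))))
  · -- continuity of the explicit formula
    apply continuousOn_finset_sum
    intro i _
    have hprodJ : ContinuousOn (fun p : ℝ × Rd d => (p.1, ι p.1 p.2)) S :=
      (continuous_fst.continuousOn).prodMk hJ
    have hPsiJ : ContinuousOn (fun p : ℝ × Rd d => Psi ζ (p.1, ι p.1 p.2)) S :=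
      (contDiff_Psi hζ).continuous.comp_continuousOn hprodJ
    have hPsiJne : ∀ p ∈ S, Psi ζ (p.1, ι p.1 p.2) ≠ 0 := fun p hp =>
      ne_of_gt (lt_of_lt_of_le hlam (det_A_pos hlam hdet hp.1 _))
    have hPsiInv : ContinuousOn (fun p : ℝ × Rd d => (Psi ζ (p.1, ι p.1 p.2))⁻¹) S :=
      hPsiJ.inv₀ hPsiJne
    have hBe : ContinuousOn (fun p : ℝ × Rd d =>
        fderiv ℝ (ι p.1) p.2 (EuclideanSpace.single i 1)) S :=
      hBc.clm_apply continuousOn_const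
    have hDv : ContinuousOn (fun p : ℝ × Rd d =>
        fderiv ℝ v (ι p.1 p.2) (fderiv ℝ (ι p.1) p.2 (EuclideanSpace.single i 1))) S :=
      (((hv.continuous_fderiv one_ne_zero).comp_continuousOn hJ)).clm_apply hBe
    have hζJ : ContinuousOn (fun p : ℝ × Rd d => ζ (ι p.1 p.2) i) S :=
      ((EuclideanSpace.proj (𝕜 := ℝ) i).continuous.comp
        (hζ.continuous.comp (continuous_id))).comp_continuousOn hJ
    have hvJ : ContinuousOn (fun p : ℝ × Rd d => v (ι p.1 p.2)) S :=
      hv.continuous.comp_continuousOn hJ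
    have hDζ : ContinuousOn (fun p : ℝ × Rd d =>
        fderiv ℝ ζ (ι p.1 p.2)
          (fderiv ℝ (ι p.1) p.2 (EuclideanSpace.single i 1)) i) S := by
      have : ContinuousOn (fun p : ℝ × Rd d =>
          fderiv ℝ ζ (ι p.1 p.2)
            (fderiv ℝ (ι p.1) p.2 (EuclideanSpace.single i 1))) S :=
        ((hζ.continuous_fderiv two_ne_zero).comp_continuousOn hJ).clm_apply hBe
      exact (EuclideanSpace.proj (𝕜 := ℝ) i).continuous.comp_continuousOn this
    have hDPsi : ContinuousOn (fun p : ℝ × Rd d =>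
        fderiv ℝ (Psi ζ) (p.1, ι p.1 p.2)
          (0, fderiv ℝ (ι p.1) p.2 (EuclideanSpace.single i 1))) S := by
      apply ContinuousOn.clm_apply
      · exact ((contDiff_Psi hζ).continuous_fderiv one_ne_zero).comp_continuousOn hprodJ
      · exact continuousOn_const.prodMk hBe
    exact ((hDv.mul hζJ).mul hPsiInv).add
      (((hvJ.mul hDζ).mul hPsiInv)) |>.sub
      (((hvJ.mul hζJ).mul ((hPsiJ.pow 2).inv₀
        (fun p hp => pow_ne_zero 2 (hPsiJne p hp)))).mul hDPsi)
  · -- equality on S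
    intro p hp
    apply Finset.sum_congr rfl
    intro i _
    have h1 : (fun y' => v (ι p.1 y') * ζ (ι p.1 y') i * |(fderiv ℝ (ι p.1) y').det|)
        = fun y' => G ζ v p.1 i (ι p.1 y') :=
      F_eq hlam hζ hdet hιl hιr hp.1 i
    rw [h1, fderiv_Fcomp_apply hlam hζ hdet hιl hιr hv hp.1 i p.2]


lemma ftc {φ : Rd d → ℝ} (hφ : ContDiff ℝ 1 φ) (hζc : Continuous ζ) (x : Rd d) :
    φ (x + ζ x) - φ x = ∫ θ in (0:ℝ)..1, fderiv ℝ φ (x + θ • ζ x) (ζ x) := by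
  have hg : ∀ θ ∈ Set.uIcc (0:ℝ) 1, HasDerivAt (fun θ : ℝ => φ (x + θ • ζ x))
      (fderiv ℝ φ (x + θ • ζ x) (ζ x)) θ := by
    intro θ _
    have h1 : HasDerivAt (fun θ : ℝ => x + θ • ζ x) (ζ x) θ := by
      simpa using ((hasDerivAt_id θ).smul_const (ζ x)).const_add x
    exact (hφ.differentiable one_ne_zero _).hasFDerivAt.comp_hasDerivAt θ h1
  have hcont : Continuous fun θ : ℝ => fderiv ℝ φ (x + θ • ζ x) (ζ x) := by
    apply Continuous.clm_apply _ continuous_const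
    exact (hφ.continuous_fderiv one_ne_zero).comp
      (continuous_const.add (continuous_id.smul continuous_const))
  have := intervalIntegral.integral_eq_sub_of_hasDerivAt hg (hcont.intervalIntegrable 0 1)
  rw [this]
  norm_num

lemma integrableOn_helper {P : Type*} [MeasurableSpace P] [TopologicalSpace P] [T2Space P]
    [OpensMeasurableSpace P] {μ : Measure P} [IsFiniteMeasureOnCompacts μ] {g : P → ℝ}
    {T K : Set P} (hT : MeasurableSet T) (hK : IsCompact K) (hKT : K ⊆ T)
    (hg : ContinuousOn g T) (h0 : ∀ p ∈ T \ K, g p = 0) :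
    IntegrableOn g T μ := by
  have h1 : IntegrableOn g K μ := hg.mono hKT |>.integrableOn_compact hK
  have h2 : IntegrableOn g (T \ K) μ := by
    rw [integrableOn_congr_fun h0 (hT.diff hK.isClosed.measurableSet)]
    exact integrableOn_zero
  exact (h1.union h2).mono_set fun p hp => by
    by_cases h : p ∈ K
    · exact Set.mem_union_left _ h
    · exact Set.mem_union_right _ ⟨hp, h⟩

end S4

/-- let `ζ : ℝ^d → ℝ^d` be `C²` with
`λ ≤ |det(I + θDζ)|` for `θ ∈ [0,1]` and `max_{0≤k≤2} sup‖D^kζ‖ ≤ M₂ < ∞`.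
Then each `τ_{θζ}(x) = x + θζ(x)` is a `C²`-diffeomorphism of `ℝ^d`
(`ι θ` denoting its inverse), and for all `v, φ ∈ C_0^∞`:
`∫ v (I^ζφ) dx = ∫ (I^{ζ*}v) φ dx`, where
`I^ζφ(x) = φ(x+ζ(x)) − φ(x)` and
`I^{ζ*}v(x) = −∫_0^1 Σ_i D_i( v(τ_{θζ}^{-1}x) ζ^i(τ_{θζ}^{-1}x) |det Dτ_{θζ}^{-1}(x)| ) dθ`. -/
theorem statement4 (d : ℕ) (lam M2 : ℝ) (hlam : 0 < lam)
    (ζ : Rd d → Rd d) (hζ : ContDiff ℝ 2 ζ)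
    (hdet : ∀ θ ∈ Set.Icc (0 : ℝ) 1, ∀ x : Rd d,
      lam ≤ |(ContinuousLinearMap.id ℝ (Rd d) + θ • fderiv ℝ ζ x).det|)
    (hM : ∀ k ≤ 2, ∀ x : Rd d, ‖iteratedFDeriv ℝ k ζ x‖ ≤ M2)
    (ι : ℝ → Rd d → Rd d)
    (hιl : ∀ θ ∈ Set.Icc (0 : ℝ) 1, Function.LeftInverse (ι θ) (fun x => x + θ • ζ x))
    (hιr : ∀ θ ∈ Set.Icc (0 : ℝ) 1, Function.RightInverse (ι θ) (fun x => x + θ • ζ x)) :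
    (∀ θ ∈ Set.Icc (0 : ℝ) 1, ContDiff ℝ 2 (ι θ)) ∧
    ∀ v φ : Rd d → ℝ, ContDiff ℝ (⊤ : ℕ∞) v → HasCompactSupport v →
      ContDiff ℝ (⊤ : ℕ∞) φ → HasCompactSupport φ →
      ∫ x : Rd d, v x * (φ (x + ζ x) - φ x)
        = ∫ x : Rd d,
            (-∫ θ in (0 : ℝ)..1, ∑ i : Fin d,
                pderiv' i
                  (fun y : Rd d =>
                    v (ι θ y) * ζ (ι θ y) i * |(fderiv ℝ (ι θ) y).det|) x)
              * φ x := by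
  have hM0 : ∀ x : Rd d, ‖ζ x‖ ≤ M2 := fun x => by
    have := hM 0 (by norm_num) x
    rwa [norm_iteratedFDeriv_zero] at this
  refine ⟨fun θ hθ => S4.contDiff_iota hlam hζ hdet hιl hιr hθ, ?_⟩
  intro v φ hv hvs hφ hφs
  have hv1 : ContDiff ℝ 1 v := hv.of_le (by simp)
  have hφ1 : ContDiff ℝ 1 φ := hφ.of_le (by simp)
  simp only [pderiv']
  have hmeas1 : (volume : Measure (Rd d)).prod (volume.restrict (Set.Icc (0:ℝ) 1))
      = ((volume : Measure (Rd d)).prod volume).restrict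
          (Set.univ ×ˢ Set.Icc (0:ℝ) 1) := by
    rw [← Measure.prod_restrict, Measure.restrict_univ]
  have hmeas2 : ((volume.restrict (Set.Icc (0:ℝ) 1)).prod (volume : Measure (Rd d)))
      = ((volume : Measure ℝ).prod volume).restrict
          (Set.Icc (0:ℝ) 1 ×ˢ Set.univ) := by
    rw [← Measure.prod_restrict, Measure.restrict_univ]
  -- integrability for the first Fubini
  have hint1 : Integrable
      (Function.uncurry fun (x : Rd d) (θ : ℝ) =>
        v x * fderiv ℝ φ (x + θ • ζ x) (ζ x))
      ((volume : Measure (Rd d)).prod (volume.restrict (Set.Icc (0:ℝ) 1))) := by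
    rw [hmeas1]
    apply S4.integrableOn_helper (MeasurableSet.univ.prod measurableSet_Icc)
      (hvs.prod isCompact_Icc) (fun p hp => ⟨trivial, hp.2⟩)
    · apply Continuous.continuousOn
      apply Continuous.mul (hv1.continuous.comp continuous_fst)
      apply Continuous.clm_apply _ (hζ.continuous.comp continuous_fst)
      exact (hφ1.continuous_fderiv one_ne_zero).comp
        (continuous_fst.add (continuous_snd.smul (hζ.continuous.comp continuous_fst)))
    · rintro ⟨x, θ⟩ ⟨hT, hK⟩
      have hx : x ∉ tsupport v := fun hmem => hK ⟨hmem, hT.2⟩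
      simp [Function.uncurry, image_eq_zero_of_notMem_tsupport hx]
  -- integrability for the second Fubini
  have hint2 : Integrable
      (Function.uncurry fun (θ : ℝ) (y : Rd d) =>
        (∑ i, fderiv ℝ
          (fun y' => v (ι θ y') * ζ (ι θ y') i * |(fderiv ℝ (ι θ) y').det|) y
          (EuclideanSpace.single i 1)) * φ y)
      ((volume.restrict (Set.Icc (0:ℝ) 1)).prod (volume : Measure (Rd d))) := by
    rw [hmeas2]
    apply S4.integrableOn_helper (measurableSet_Icc.prod MeasurableSet.univ)
      (isCompact_Icc.prod hφs) (fun p hp => ⟨hp.1, trivial⟩)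
    · exact (S4.H_contOn hlam hζ hM0 hdet hιl hιr hv1).mul
        ((hφ1.continuous.comp continuous_snd).continuousOn)
    · rintro ⟨θ, y⟩ ⟨hT, hK⟩
      have hy : y ∉ tsupport φ := fun hmem => hK ⟨hT.1, hmem⟩
      simp [Function.uncurry, image_eq_zero_of_notMem_tsupport hy]
  calc ∫ x : Rd d, v x * (φ (x + ζ x) - φ x)
      = ∫ x : Rd d, ∫ θ in Set.Icc (0:ℝ) 1,
          v x * fderiv ℝ φ (x + θ • ζ x) (ζ x) := by
        congr 1
        funext x
        rw [S4.ftc hφ1 hζ.continuous x, ← intervalIntegral.integral_const_mul,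
          intervalIntegral.integral_of_le zero_le_one, ← integral_Icc_eq_integral_Ioc]
    _ = ∫ θ in Set.Icc (0:ℝ) 1, ∫ x : Rd d,
          v x * fderiv ℝ φ (x + θ • ζ x) (ζ x) := integral_integral_swap hint1
    _ = ∫ θ in Set.Icc (0:ℝ) 1, -∫ y : Rd d,
          (∑ i, fderiv ℝ
            (fun y' => v (ι θ y') * ζ (ι θ y') i * |(fderiv ℝ (ι θ) y').det|) y
            (EuclideanSpace.single i 1)) * φ y := by
        apply setIntegral_congr_fun measurableSet_Icc
        intro θ hθ
        have k := S4.key_theta hlam hζ hdet hιl hιr hv1 hvs hφ1 hφs hθ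
        dsimp only
        rw [k, neg_neg]
    _ = -∫ θ in Set.Icc (0:ℝ) 1, ∫ y : Rd d,
          (∑ i, fderiv ℝ
            (fun y' => v (ι θ y') * ζ (ι θ y') i * |(fderiv ℝ (ι θ) y').det|) y
            (EuclideanSpace.single i 1)) * φ y := integral_neg _
    _ = -∫ y : Rd d, ∫ θ in Set.Icc (0:ℝ) 1,
          (∑ i, fderiv ℝ
            (fun y' => v (ι θ y') * ζ (ι θ y') i * |(fderiv ℝ (ι θ) y').det|) y
            (EuclideanSpace.single i 1)) * φ y := by
        rw [integral_integral_swap hint2]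
    _ = ∫ y : Rd d,
          (-∫ θ in (0 : ℝ)..1, ∑ i, fderiv ℝ
            (fun y' => v (ι θ y') * ζ (ι θ y') i * |(fderiv ℝ (ι θ) y').det|) y
            (EuclideanSpace.single i 1)) * φ y := by
        rw [← integral_neg]
        congr 1
        funext y
        rw [neg_mul, MeasureTheory.integral_mul_const,
          intervalIntegral.integral_of_le zero_le_one, ← integral_Icc_eq_integral_Ioc]

end
end

section
/- Let ξ : ℝ^d → ℝ^d be such that for a constant L ≥ 1 and every θ ∈ [0,1] the map τ_θ(x) = x + θξ(x) is L-biLipschitz, i.e. L^{−1}|x−y| ≤ |τ_θ(x) − τ_θ(y)| ≤ L|x−y| for all x, y ∈ ℝ^d. Then for every M > L and every R > 0 there exists ε = ε(L, M, R, |ξ(0)|) > 0 such that, with κ^R := κ^R_ε, the function ξ^R := κ^R ξ vanishes for |x| ≥ R̄ for a constant R̄ = R̄(L, M, R, |ξ(0)|) > R, |ξ^R| is bounded on ℝ^d by a constant N = N(L, M, R, |ξ(0)|), and for every θ ∈ [0,1] the map τ^R_θ(x) = x + θ ξ^R(x) is M-biLipschitz. -/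
open MeasureTheory Real

noncomputable section

def phiRe {d : ℕ} (R ε : ℝ) (x : Rd d) : ℝ :=
  if ‖x‖ ≤ R + 1 then 1
  else if ‖x‖ < (R + 1) * Real.exp (1 / ε) then 1 + ε * Real.log ((R + 1) / ‖x‖)
  else 0

lemma abs_log_sub_log_le {u v : ℝ} (hu : 0 < u) (hv : 0 < v) :
    |Real.log u - Real.log v| ≤ |u - v| / min u v := by
  wlog h : v ≤ u generalizing u v
  · rw [abs_sub_comm, abs_sub_comm u v, min_comm]
    exact this hv hu (le_of_not_ge h)
  have h2 : 0 ≤ Real.log u - Real.log v := sub_nonneg.2 (Real.log_le_log hv h)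
  have h1 : Real.log u - Real.log v ≤ (u - v) / v := by
    rw [← Real.log_div (ne_of_gt hu) (ne_of_gt hv)]
    calc Real.log (u / v) ≤ u / v - 1 := Real.log_le_sub_one_of_pos (div_pos hu hv)
      _ = (u - v) / v := by field_simp
  rw [abs_of_nonneg h2, abs_of_nonneg (by linarith), min_eq_right h]
  exact h1

def gcut {d : ℕ} (R ε : ℝ) (x : Rd d) : ℝ :=
  min 1 (max 0 (1 + ε * Real.log ((R + 1) / max ‖x‖ (R + 1))))

lemma phiRe_eq {d : ℕ} {R ε : ℝ} (hR : 0 < R) (hε : 0 < ε) (x : Rd d) :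
    phiRe R ε x = gcut R ε x := by
  have hR1 : (0:ℝ) < R + 1 := by linarith
  unfold phiRe gcut
  by_cases h1 : ‖x‖ ≤ R + 1
  · rw [if_pos h1, max_eq_right h1, div_self (ne_of_gt hR1), Real.log_one]
    norm_num
  · push_neg at h1
    have hx0 : 0 < ‖x‖ := lt_trans hR1 h1
    rw [if_neg (not_le.2 h1), max_eq_left h1.le]
    have hlog : Real.log ((R + 1) / ‖x‖) ≤ 0 :=
      Real.log_nonpos (by positivity) ((div_le_one hx0).2 h1.le)
    by_cases h2 : ‖x‖ < (R + 1) * Real.exp (1 / ε)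
    · rw [if_pos h2]
      have hgt : -(1/ε) < Real.log ((R + 1) / ‖x‖) := by
        rw [← Real.log_exp (-(1/ε))]
        apply Real.log_lt_log (Real.exp_pos _)
        rw [Real.exp_neg, lt_div_iff₀ hx0, inv_mul_eq_div, div_lt_iff₀ (Real.exp_pos _)]
        linarith [h2]
      have : 0 < 1 + ε * Real.log ((R + 1) / ‖x‖) := by
        have := mul_lt_mul_of_pos_left hgt hε
        rw [mul_neg, mul_one_div, div_self (ne_of_gt hε)] at this
        linarith
      rw [max_eq_right this.le, min_eq_right (by nlinarith)]
    · rw [if_neg h2]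
      push_neg at h2
      have hle : Real.log ((R + 1) / ‖x‖) ≤ -(1/ε) := by
        rw [← Real.log_exp (-(1/ε))]
        apply Real.log_le_log (by positivity)
        rw [Real.exp_neg, div_le_iff₀ hx0, inv_mul_eq_div, le_div_iff₀ (Real.exp_pos _)]
        linarith [h2]
      have : 1 + ε * Real.log ((R + 1) / ‖x‖) ≤ 0 := by
        have := mul_le_mul_of_nonneg_left hle hε.le
        rw [mul_neg, mul_one_div, div_self (ne_of_gt hε)] at this
        linarith
      rw [max_eq_left this, min_eq_right zero_le_one]

lemma gcut_nonneg {d : ℕ} {R ε : ℝ} (x : Rd d) : 0 ≤ gcut R ε x :=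
  le_min zero_le_one (le_max_left _ _)

lemma gcut_le_one {d : ℕ} {R ε : ℝ} (x : Rd d) : gcut R ε x ≤ 1 := min_le_left _ _

lemma gcut_zero {d : ℕ} {R ε : ℝ} (hR : 0 < R) (hε : 0 < ε) (x : Rd d)
    (hx : (R + 1) * Real.exp (1 / ε) ≤ ‖x‖) : gcut R ε x = 0 := by
  rw [← phiRe_eq hR hε]
  unfold phiRe
  have hR1 : (0:ℝ) < R + 1 := by linarith
  have h1 : R + 1 < ‖x‖ := by
    have : R + 1 < (R+1) * Real.exp (1/ε) := by
      nlinarith [Real.one_lt_exp_iff.2 (by positivity : (0:ℝ) < 1/ε)]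
    linarith
  rw [if_neg (not_le.2 h1), if_neg (not_lt.2 hx)]

lemma gcut_cont {d : ℕ} {R ε : ℝ} (hR : 0 < R) : Continuous (gcut (d := d) R ε) := by
  have hR1 : (0:ℝ) < R + 1 := by linarith
  have hden : Continuous fun x : Rd d => max ‖x‖ (R + 1) := continuous_norm.max continuous_const
  have hdenpos : ∀ x : Rd d, 0 < max ‖x‖ (R + 1) := fun x => lt_max_of_lt_right hR1
  have hfrac : Continuous fun x : Rd d => (R + 1) / max ‖x‖ (R + 1) :=
    continuous_const.div hden fun x => ne_of_gt (hdenpos x)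
  have hlog : Continuous fun x : Rd d => Real.log ((R + 1) / max ‖x‖ (R + 1)) :=
    hfrac.log fun x => ne_of_gt (by positivity)
  exact continuous_const.min ((continuous_const.max (continuous_const.add
    (continuous_const.mul hlog))))

lemma gcut_lip {d : ℕ} {R ε : ℝ} (hR : 0 < R) (hε : 0 < ε) (a b : Rd d) :
    |gcut R ε a - gcut R ε b| ≤ ε * ‖a - b‖ / max (min ‖a‖ ‖b‖) (R + 1) := by
  have hR1 : (0:ℝ) < R + 1 := by linarith
  set ma := max ‖a‖ (R + 1) with hma
  set mb := max ‖b‖ (R + 1) with hmb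
  have hmapos : 0 < ma := lt_max_of_lt_right hR1
  have hmbpos : 0 < mb := lt_max_of_lt_right hR1
  have step1 : |gcut R ε a - gcut R ε b| ≤
      |(1 + ε * Real.log ((R+1)/ma)) - (1 + ε * Real.log ((R+1)/mb))| := by
    show |min 1 (max 0 (1 + ε * Real.log ((R+1)/ma))) -
          min 1 (max 0 (1 + ε * Real.log ((R+1)/mb)))| ≤ _
    refine le_trans (abs_min_sub_min_le_max _ _ _ _) (max_le (by simp) ?_)
    rw [max_comm (0:ℝ), max_comm (0:ℝ)]
    exact abs_max_sub_max_le_abs _ _ _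
  have step2 : (1 + ε * Real.log ((R+1)/ma)) - (1 + ε * Real.log ((R+1)/mb))
      = ε * (Real.log mb - Real.log ma) := by
    rw [Real.log_div (ne_of_gt hR1) (ne_of_gt hmapos),
        Real.log_div (ne_of_gt hR1) (ne_of_gt hmbpos)]
    ring
  rw [step2] at step1
  have step3 : |ε * (Real.log mb - Real.log ma)| ≤ ε * (|mb - ma| / min mb ma) := by
    rw [abs_mul, abs_of_nonneg hε.le]
    exact mul_le_mul_of_nonneg_left (abs_log_sub_log_le hmbpos hmapos) hε.le
  have h4 : |mb - ma| ≤ ‖a - b‖ := by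
    refine le_trans (abs_max_sub_max_le_abs _ _ _) ?_
    rw [← norm_sub_rev]
    exact abs_norm_sub_norm_le _ _
  have h5 : min mb ma = max (min ‖a‖ ‖b‖) (R + 1) := by
    rw [hma, hmb, max_min_distrib_right, min_comm]
  have hD : 0 < max (min ‖a‖ ‖b‖) (R + 1) := lt_max_of_lt_right hR1
  calc |gcut R ε a - gcut R ε b| ≤ ε * (|mb - ma| / min mb ma) := step1.trans step3
    _ ≤ ε * (‖a - b‖ / max (min ‖a‖ ‖b‖) (R + 1)) := by
        apply mul_le_mul_of_nonneg_left _ hε.le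
        rw [h5]
        exact div_le_div₀ (norm_nonneg _) h4 hD (le_refl _)
    _ = ε * ‖a - b‖ / max (min ‖a‖ ‖b‖) (R + 1) := by ring


lemma C0key_aux (L R xi t : ℝ) (hL : 1 ≤ L) (hR : 0 < R) (hxi : 0 ≤ xi) (ht : 0 ≤ t) :
    xi + (L + 1) * t ≤ ((xi + (L + 1) * (R + 2)) * (R + 2) / (R + 1)) * max (t - 1) (R + 1) := by
  have hApos : 0 < xi + (L + 1) * (R + 2) := by nlinarith
  rw [div_mul_eq_mul_div, le_div_iff₀ (by linarith : (0:ℝ) < R + 1)]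
  rcases le_total t (R + 2) with h | h
  · rw [max_eq_right (by linarith : t - 1 ≤ R + 1)]
    have h0 : xi + (L + 1) * t ≤ xi + (L + 1) * (R + 2) := by
      have := mul_le_mul_of_nonneg_left h (by linarith : (0:ℝ) ≤ L + 1)
      linarith
    have h1 : xi + (L + 1) * (R + 2) ≤ (xi + (L + 1) * (R + 2)) * (R + 2) :=
      le_mul_of_one_le_right hApos.le (by linarith)
    have := mul_le_mul_of_nonneg_right (h0.trans h1) (by linarith : (0:ℝ) ≤ R + 1)
    linarith
  · rw [max_eq_left (by linarith : R + 1 ≤ t - 1)]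
    have h1 : (R + 1) * t ≤ (R + 2) * (t - 1) := by nlinarith
    calc (xi + (L + 1) * t) * (R + 1) ≤ (xi + (L + 1) * (R + 2)) * ((R + 1) * t) := by
          nlinarith [mul_nonneg (mul_nonneg hxi (by linarith : (0:ℝ) ≤ R + 1))
            (by linarith : (0:ℝ) ≤ t - 1),
            mul_nonneg (mul_nonneg (by nlinarith : (0:ℝ) ≤ (L + 1) * (R + 1)) ht)
            (by linarith : (0:ℝ) ≤ R + 1)]
      _ ≤ (xi + (L + 1) * (R + 2)) * ((R + 2) * (t - 1)) :=
          mul_le_mul_of_nonneg_left h1 hApos.le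
      _ = (xi + (L + 1) * (R + 2)) * (R + 2) * (t - 1) := by ring

set_option maxHeartbeats 1000000 in
/-- let `ξ : ℝ^d → ℝ^d` be such that each `τ_θ(x) = x + θξ(x)`,
`θ ∈ [0,1]`, is `L`-biLipschitz (`L ≥ 1`).  Then for every `M > L` and `R > 0`
there are `ε = ε(L,M,R,|ξ(0)|) > 0`, `R̄ = R̄(L,M,R,|ξ(0)|) > R` and
`N = N(L,M,R,|ξ(0)|)` such that, with `κ^R := κ^R_ε` (the mollified cutoff
built from a nonnegative smooth kernel `k` of unit integral supported in the
unit ball), the function `ξ^R := κ^R ξ` vanishes for `|x| ≥ R̄`, `|ξ^R| ≤ N`,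
and each `τ^R_θ(x) = x + θξ^R(x)` is `M`-biLipschitz. -/
theorem statement18 (d : ℕ) (L M R ξ0 : ℝ) (hL : 1 ≤ L) (hM : L < M) (hR : 0 < R) :
    ∃ ε : ℝ, 0 < ε ∧ ∃ Rbar : ℝ, R < Rbar ∧ ∃ N : ℝ,
      ∀ (k : Rd d → ℝ) (ξ : Rd d → Rd d),
        ContDiff ℝ (⊤ : ℕ∞) k →
        (∀ y : Rd d, 0 ≤ k y) →
        (∀ y : Rd d, 1 ≤ ‖y‖ → k y = 0) →
        (∫ y : Rd d, k y) = 1 →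
        (∀ θ ∈ Set.Icc (0 : ℝ) 1, ∀ x y : Rd d,
          L⁻¹ * ‖x - y‖ ≤ ‖(x + θ • ξ x) - (y + θ • ξ y)‖ ∧
          ‖(x + θ • ξ x) - (y + θ • ξ y)‖ ≤ L * ‖x - y‖) →
        ‖ξ 0‖ ≤ ξ0 →
        (∀ x : Rd d, Rbar ≤ ‖x‖ →
          (∫ y : Rd d, phiRe R ε (x - y) * k y) • ξ x = 0) ∧
        (∀ x : Rd d, ‖(∫ y : Rd d, phiRe R ε (x - y) * k y) • ξ x‖ ≤ N) ∧
        (∀ θ ∈ Set.Icc (0 : ℝ) 1, ∀ x y : Rd d,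
          M⁻¹ * ‖x - y‖
            ≤ ‖(x + θ • (∫ w : Rd d, phiRe R ε (x - w) * k w) • ξ x)
                - (y + θ • (∫ w : Rd d, phiRe R ε (y - w) * k w) • ξ y)‖ ∧
          ‖(x + θ • (∫ w : Rd d, phiRe R ε (x - w) * k w) • ξ x)
              - (y + θ • (∫ w : Rd d, phiRe R ε (y - w) * k w) • ξ y)‖
            ≤ M * ‖x - y‖) := by
  have hL0 : (0:ℝ) < L := lt_of_lt_of_le one_pos hL
  have hM0 : (0:ℝ) < M := lt_trans hL0 hM
  set ξ0' : ℝ := max ξ0 0 with hξ0'def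
  have hξ0'nn : 0 ≤ ξ0' := le_max_right _ _
  set A : ℝ := ξ0' + (L + 1) * (R + 2) with hAdef
  have hApos : 0 < A := by nlinarith
  set C0 : ℝ := A * (R + 2) / (R + 1) with hC0def
  have hC0pos : 0 < C0 := by
    apply div_pos (mul_pos hApos (by linarith)) (by linarith)
  set δ : ℝ := min (M - L) (L⁻¹ - M⁻¹) with hδdef
  have hinv : M⁻¹ < L⁻¹ := by rw [inv_lt_inv₀ hM0 hL0]; exact hM
  have hδpos : 0 < δ := lt_min (by linarith) (by linarith)
  have hδ1 : δ ≤ M - L := min_le_left _ _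
  have hδ2 : δ ≤ L⁻¹ - M⁻¹ := min_le_right _ _
  set ε : ℝ := δ / C0 with hεdef
  have hεpos : 0 < ε := div_pos hδpos hC0pos
  have hεC0 : ε * C0 = δ := div_mul_cancel₀ δ (ne_of_gt hC0pos)
  set Rbar : ℝ := (R + 1) * Real.exp (1 / ε) + 1 with hRbardef
  have hexp1 : 1 ≤ Real.exp (1 / ε) := Real.one_le_exp (by positivity)
  have hRRbar : R < Rbar := by
    have := mul_le_mul_of_nonneg_left hexp1 (by linarith : (0:ℝ) ≤ R + 1)
    rw [mul_one] at this
    rw [hRbardef]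
    linarith
  have hRbarpos : 0 < Rbar := lt_trans hR hRRbar
  set N : ℝ := ξ0' + (L + 1) * Rbar with hNdef
  have hN0 : 0 ≤ N := by nlinarith
  refine ⟨ε, hεpos, Rbar, hRRbar, N, ?_⟩
  intro k ξ hk hknn hksupp hkint hbil hξ0
  have hphi : ∀ z : Rd d, phiRe R ε z = gcut R ε z := phiRe_eq hR hεpos
  simp only [hphi]
  set κ : Rd d → ℝ := fun z => ∫ w : Rd d, gcut R ε (z - w) * k w with hκdef
  -- integrability
  have hkcont : Continuous k := hk.continuous
  have hkcs : HasCompactSupport k := by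
    apply HasCompactSupport.intro (isCompact_closedBall (0 : Rd d) 1)
    intro x hx
    simp only [Metric.mem_closedBall, dist_zero_right, not_le] at hx
    exact hksupp x hx.le
  have hki : Integrable k := hkcont.integrable_of_hasCompactSupport hkcs
  have hgi : ∀ x : Rd d, Integrable (fun w => gcut R ε (x - w) * k w) := by
    intro x
    apply Continuous.integrable_of_hasCompactSupport
    · exact ((gcut_cont hR).comp (continuous_const.sub continuous_id)).mul hkcont
    · apply HasCompactSupport.intro (isCompact_closedBall (0 : Rd d) 1)
      intro w hw
      simp only [Metric.mem_closedBall, dist_zero_right, not_le] at hw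
      rw [hksupp w hw.le, mul_zero]
  -- κ between 0 and 1
  have hκ0 : ∀ x, 0 ≤ κ x := fun x =>
    integral_nonneg fun w => mul_nonneg (gcut_nonneg _) (hknn w)
  have hκ1 : ∀ x, κ x ≤ 1 := by
    intro x
    rw [hκdef, ← hkint]
    exact integral_mono (hgi x) hki fun w => mul_le_of_le_one_left (hknn w) (gcut_le_one _)
  -- κ vanishes far away
  have hκzero : ∀ x : Rd d, Rbar ≤ ‖x‖ → κ x = 0 := by
    intro x hx
    have hz : ∀ w : Rd d, gcut R ε (x - w) * k w = 0 := by
      intro w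
      by_cases hw : k w = 0
      · rw [hw, mul_zero]
      · have hw1 : ‖w‖ < 1 := by
          by_contra h
          exact hw (hksupp w (not_lt.1 h))
        have hfar : (R + 1) * Real.exp (1 / ε) ≤ ‖x - w‖ := by
          have hxw : ‖x‖ - ‖w‖ ≤ ‖x - w‖ := norm_sub_norm_le x w
          rw [hRbardef] at hx
          linarith
        rw [gcut_zero hR hεpos _ hfar, zero_mul]
    rw [hκdef]
    simp only [hz, integral_zero]
  -- growth of ξ
  have hξgrow : ∀ y : Rd d, ‖ξ y‖ ≤ ξ0' + (L + 1) * ‖y‖ := by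
    intro y
    have h1 := (hbil 1 ⟨zero_le_one, le_refl 1⟩ y 0).2
    simp only [one_smul, sub_zero] at h1
    have e : ξ y = ((y + ξ y) - (0 + ξ 0) - y) + ξ 0 := by abel
    calc ‖ξ y‖ = ‖((y + ξ y) - (0 + ξ 0) - y) + ξ 0‖ := by rw [← e]
      _ ≤ ‖(y + ξ y) - (0 + ξ 0) - y‖ + ‖ξ 0‖ := norm_add_le _ _
      _ ≤ (‖(y + ξ y) - (0 + ξ 0)‖ + ‖y‖) + ‖ξ 0‖ := by
          gcongr
          exact norm_sub_le _ _
      _ ≤ (L * ‖y‖ + ‖y‖) + ξ0' := by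
          gcongr
          exact le_trans hξ0 (le_max_left _ _)
      _ = ξ0' + (L + 1) * ‖y‖ := by ring
  -- Lipschitz-type estimate on κ
  have hκlip : ∀ x y : Rd d, ‖y‖ ≤ ‖x‖ →
      |κ x - κ y| ≤ ε * ‖x - y‖ / max (‖y‖ - 1) (R + 1) := by
    intro x y hyx
    set D : ℝ := max (‖y‖ - 1) (R + 1) with hDdef
    have hDpos : 0 < D := lt_max_of_lt_right (by linarith)
    have hsub : κ x - κ y = ∫ w : Rd d, (gcut R ε (x - w) - gcut R ε (y - w)) * k w := by
      rw [hκdef]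
      simp only [sub_mul]
      rw [integral_sub (hgi x) (hgi y)]
    rw [hsub]
    have hbound : ∀ w : Rd d,
        ‖(gcut R ε (x - w) - gcut R ε (y - w)) * k w‖ ≤ (ε * ‖x - y‖ / D) * k w := by
      intro w
      by_cases hw : k w = 0
      · rw [hw, mul_zero, mul_zero, norm_zero]
      · have hw1 : ‖w‖ < 1 := by
          by_contra h
          exact hw (hksupp w (not_lt.1 h))
        rw [norm_mul, Real.norm_of_nonneg (hknn w)]
        apply mul_le_mul_of_nonneg_right _ (hknn w)
        rw [Real.norm_eq_abs]
        refine le_trans (gcut_lip hR hεpos _ _) ?_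
        have heq : (x - w) - (y - w) = x - y := by abel
        rw [heq]
        refine div_le_div₀ (by positivity) (le_refl _) hDpos ?_
        refine max_le_max (le_min ?_ ?_) (le_refl _)
        · linarith [norm_sub_norm_le x w]
        · linarith [norm_sub_norm_le y w]
    calc |∫ w : Rd d, (gcut R ε (x - w) - gcut R ε (y - w)) * k w|
        ≤ ∫ w : Rd d, (ε * ‖x - y‖ / D) * k w := by
          rw [← Real.norm_eq_abs]
          exact norm_integral_le_of_norm_le (hki.const_mul _)
            (Filter.Eventually.of_forall hbound)
      _ = ε * ‖x - y‖ / D := by rw [integral_const_mul, hkint, mul_one]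
  -- key scalar inequality
  have hC0key : ∀ t : ℝ, 0 ≤ t → ξ0' + (L + 1) * t ≤ C0 * max (t - 1) (R + 1) := by
    intro t ht
    rw [hC0def, hAdef]
    exact C0key_aux L R ξ0' t hL hR hξ0'nn ht
  -- the key biLipschitz estimate (for ‖y‖ ≤ ‖x‖)
  have key : ∀ θ ∈ Set.Icc (0:ℝ) 1, ∀ x y : Rd d, ‖y‖ ≤ ‖x‖ →
      M⁻¹ * ‖x - y‖ ≤ ‖(x + θ • κ x • ξ x) - (y + θ • κ y • ξ y)‖ ∧
      ‖(x + θ • κ x • ξ x) - (y + θ • κ y • ξ y)‖ ≤ M * ‖x - y‖ := by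
    intro θ hθ x y hyx
    obtain ⟨hθ0, hθ1⟩ := hθ
    set D : ℝ := max (‖y‖ - 1) (R + 1) with hDdef
    have hDpos : 0 < D := lt_max_of_lt_right (by linarith)
    have hθκ : θ * κ x ∈ Set.Icc (0:ℝ) 1 :=
      ⟨mul_nonneg hθ0 (hκ0 x), mul_le_one₀ hθ1 (hκ0 x) (hκ1 x)⟩
    have hb := hbil (θ * κ x) hθκ x y
    set b : Rd d := (x + (θ * κ x) • ξ x) - (y + (θ * κ x) • ξ y) with hbdef
    set c : Rd d := (θ * (κ x - κ y)) • ξ y with hcdef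
    have habc : (x + θ • κ x • ξ x) - (y + θ • κ y • ξ y) = b + c := by
      rw [hbdef, hcdef]
      module
    have hθabs : |θ| ≤ 1 := abs_le.2 ⟨by linarith, hθ1⟩
    have hκd := hκlip x y hyx
    have hξy := hξgrow y
    have hc : ‖c‖ ≤ δ * ‖x - y‖ := by
      rw [hcdef, norm_smul, Real.norm_eq_abs, abs_mul]
      calc |θ| * |κ x - κ y| * ‖ξ y‖
          ≤ (ε * ‖x - y‖ / D) * (ξ0' + (L + 1) * ‖y‖) := by
            apply mul_le_mul _ hξy (norm_nonneg _) (by positivity)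
            calc |θ| * |κ x - κ y| ≤ 1 * (ε * ‖x - y‖ / D) :=
                  mul_le_mul hθabs hκd (abs_nonneg _) zero_le_one
              _ = ε * ‖x - y‖ / D := one_mul _
        _ ≤ (ε * ‖x - y‖ / D) * (C0 * D) :=
            mul_le_mul_of_nonneg_left (hC0key ‖y‖ (norm_nonneg _)) (by positivity)
        _ = (ε * C0) * ‖x - y‖ := by field_simp
        _ = δ * ‖x - y‖ := by rw [hεC0]
    rw [habc]
    have hlow := hb.1
    have hup := hb.2
    have htri1 : ‖b + c‖ ≤ ‖b‖ + ‖c‖ := norm_add_le _ _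
    have htri2 : ‖b‖ ≤ ‖b + c‖ + ‖c‖ := by
      calc ‖b‖ = ‖(b + c) - c‖ := by rw [add_sub_cancel_right]
        _ ≤ ‖b + c‖ + ‖c‖ := norm_sub_le _ _
    constructor
    · nlinarith [mul_nonneg (by linarith : (0:ℝ) ≤ L⁻¹ - M⁻¹ - δ) (norm_nonneg (x - y))]
    · nlinarith [mul_nonneg (by linarith : (0:ℝ) ≤ M - L - δ) (norm_nonneg (x - y))]
  refine ⟨?_, ?_, ?_⟩
  · intro x hx
    show κ x • ξ x = 0
    rw [hκzero x hx, zero_smul]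
  · intro x
    show ‖κ x • ξ x‖ ≤ N
    rcases le_total Rbar ‖x‖ with h | h
    · rw [hκzero x h, zero_smul, norm_zero]
      exact hN0
    · rw [norm_smul, Real.norm_eq_abs, abs_of_nonneg (hκ0 x)]
      calc κ x * ‖ξ x‖ ≤ 1 * (ξ0' + (L + 1) * ‖x‖) :=
            mul_le_mul (hκ1 x) (hξgrow x) (norm_nonneg _) zero_le_one
        _ ≤ N := by rw [hNdef]; nlinarith
  · intro θ hθ x y
    show M⁻¹ * ‖x - y‖ ≤ ‖(x + θ • κ x • ξ x) - (y + θ • κ y • ξ y)‖ ∧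
      ‖(x + θ • κ x • ξ x) - (y + θ • κ y • ξ y)‖ ≤ M * ‖x - y‖
    rcases le_total ‖y‖ ‖x‖ with h | h
    · exact key θ hθ x y h
    · have hk2 := key θ hθ y x h
      rw [norm_sub_rev x y, norm_sub_rev (x + θ • κ x • ξ x)]
      exact hk2

end
end
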